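/- arXiv:1411.5509 — 4 statements merged into one kernel-verified Lean document; each statement's English description precedes it below -/
import Mathlib

section
/- Let G be a connected r-regular simple graph with n vertices and m edges, and let L_RT denote the Laplacian matrix of RT(G) written in block form. Then for every real number μ with μ ≠ 1, μ ≠ 2 and μ ≠ 3, det(μ·I_{m+3n} − L_RT) = (μ−1)^n · (μ−2)^(m−n) · (μ−3)^n · (3−μ)^n · det( x·I_n − A(G) ), where x = (μ−2)²/(3−μ) + r(2μ−3)/(μ−3) + 2(μ−2)/((μ−1)(μ−3)) and A(G) is the adjacency matrix of G. -/
/-!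
Eliminate the edge-vertices by a Schur complement with respect to the scalar block
`(μ - 2) • 1`, then the pair vertices with respect to `1 ⊗ₖ !![μ-2, 1; 1, μ-2]`. The rows of the
latter block sum to `μ - 1`, so it acts on the columns of `I_n ⊗ 𝟙₂` as multiplication by `μ - 1`
and no explicit inverse is needed. For an `r`-regular graph `B * Bᵀ = r • 1 + A` and
`L = r • 1 - A`, so the remaining `n × n` Schur complement is `(3 - μ) / (μ - 2) • (x • 1 - A)`.
-/

open Matrix SimpleGraph

/-- The Laplacian matrix of `RT(G)` in block form, given the vertex–edge incidence
matrix `B` of an `r`-regular graph `G` and its Laplacian matrix `L`.  The index type is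
(edge-vertices of `G`) ⊕ (original vertices of `G`) ⊕ (pairs of new vertices). -/
def LRTMatrix {n m : ℕ} (r : ℕ) (B : Matrix (Fin n) (Fin m) ℝ)
    (L : Matrix (Fin n) (Fin n) ℝ) :
    Matrix (Fin m ⊕ Fin n ⊕ Fin n × Fin 2) (Fin m ⊕ Fin n ⊕ Fin n × Fin 2) ℝ :=
  fun i j =>
    match i, j with
    | Sum.inl a, Sum.inl b => if a = b then 2 else 0
    | Sum.inl a, Sum.inr (Sum.inl v) => -(B v a)
    | Sum.inl _, Sum.inr (Sum.inr _) => 0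
    | Sum.inr (Sum.inl v), Sum.inl a => -(B v a)
    | Sum.inr (Sum.inl v), Sum.inr (Sum.inl w) => L v w + (if v = w then (r : ℝ) + 2 else 0)
    | Sum.inr (Sum.inl v), Sum.inr (Sum.inr (w, _)) => if v = w then -1 else 0
    | Sum.inr (Sum.inr _), Sum.inl _ => 0
    | Sum.inr (Sum.inr (w, _)), Sum.inr (Sum.inl v) => if w = v then -1 else 0
    | Sum.inr (Sum.inr (w, k)), Sum.inr (Sum.inr (w', k')) =>
        if w = w' then (if k = k' then 2 else -1) else 0

open Kronecker

namespace Matrix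

variable {R m n ι : Type*} [Fintype m] [Fintype n] [DecidableEq m] [DecidableEq n]

section Schur

variable [Field R]

theorem det_fromBlocks_of_mul_eq_smul₁₁ (A : Matrix m m R) (B : Matrix m n R)
    (C : Matrix n m R) (D : Matrix n n R) {c : R} (hc : c ≠ 0) (hA : IsUnit A.det)
    (hAB : A * B = c • B) :
    (fromBlocks A B C D).det = A.det * (D - c⁻¹ • (C * B)).det := by
  let _ := invertibleOfIsUnitDet A hA
  have hinv : ⅟A * B = c⁻¹ • B := by
    rw [← Matrix.invOf_mul_cancel_left A (c⁻¹ • B), Matrix.mul_smul, hAB, smul_smul,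
      inv_mul_cancel₀ hc, one_smul]
  rw [det_fromBlocks₁₁, Matrix.mul_assoc, hinv, Matrix.mul_smul]

theorem det_fromBlocks_of_mul_eq_smul₂₂ (A : Matrix m m R) (B : Matrix m n R)
    (C : Matrix n m R) (D : Matrix n n R) {c : R} (hc : c ≠ 0) (hD : IsUnit D.det)
    (hDC : D * C = c • C) :
    (fromBlocks A B C D).det = D.det * (A - c⁻¹ • (B * C)).det := by
  let _ := invertibleOfIsUnitDet D hD
  have hinv : ⅟D * C = c⁻¹ • C := by
    rw [← Matrix.invOf_mul_cancel_left D (c⁻¹ • C), Matrix.mul_smul, hDC, smul_smul,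
      inv_mul_cancel₀ hc, one_smul]
  rw [det_fromBlocks₂₂, Matrix.mul_assoc, hinv, Matrix.mul_smul]

end Schur

variable (R n ι) in
/-- For `ι = Fin 2` this is the paper's `I_n ⊗ 𝟙₂ᵀ`. -/
def fstIndicator [Zero R] [One R] : Matrix n (n × ι) R :=
  of fun v p => if v = p.1 then 1 else 0

variable [Fintype ι]

theorem fstIndicator_mul_transpose [Semiring R] :
    fstIndicator R n ι * (fstIndicator R n ι)ᵀ = (Fintype.card ι : R) • 1 := by
  ext v w
  rcases eq_or_ne v w with rfl | hvw <;>
    simp [fstIndicator, mul_apply, Fintype.sum_prod_type, *]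

theorem one_kronecker_mul_transpose_fstIndicator [DecidableEq ι] [CommSemiring R]
    (g : Matrix ι ι R) {c : R} (hg : ∀ i, ∑ j, g i j = c) :
    ((1 : Matrix n n R) ⊗ₖ g) * (fstIndicator R n ι)ᵀ = c • (fstIndicator R n ι)ᵀ := by
  ext ⟨v, i⟩ w
  simp [fstIndicator, mul_apply, Fintype.sum_prod_type, one_apply, ← hg i, eq_comm]

end Matrix

namespace SimpleGraph

variable {V R : Type*} [Fintype V] [DecidableEq V] (G : SimpleGraph V) [DecidableRel G.Adj]

theorem degMatrix_eq_smul_one_of_isRegularOfDegree [Semiring R] {r : ℕ}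
    (hreg : G.IsRegularOfDegree r) : G.degMatrix R = (r : R) • 1 := by
  ext v w
  simp [degMatrix, diagonal_apply, one_apply, hreg v]

theorem lapMatrix_eq_of_isRegularOfDegree [Ring R] {r : ℕ}
    (hreg : G.IsRegularOfDegree r) : G.lapMatrix R = (r : R) • 1 - G.adjMatrix R := by
  rw [lapMatrix, G.degMatrix_eq_smul_one_of_isRegularOfDegree hreg]

theorem mul_transpose_eq_degMatrix_add_adjMatrix {ι : Type*} [Fintype ι] [Semiring R]
    (φ : ι ≃ G.edgeSet) (B : Matrix V ι R)
    (hB : ∀ v j, B v j = if v ∈ (φ j : Sym2 V) then 1 else 0) :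
    B * Bᵀ = G.degMatrix R + G.adjMatrix R := by
  have hB_inc : ∀ v j, B v j = G.incMatrix R v (φ j) := fun v j => by
    rw [hB, incMatrix_apply']
    simp [incidenceSet, (φ j).prop]
  have hsum (f : Sym2 V → R) (hf : ∀ e ∉ G.edgeSet, f e = 0) :
      ∑ j, f (φ j) = ∑ e, f e := by
    rw [Equiv.sum_comp φ (fun e => f e), ← Finset.sum_subtype G.edgeFinset (by simp)]
    exact Finset.sum_subset (Finset.subset_univ _) fun e _ he => hf e (by simpa using he)
  ext v w
  calc (B * Bᵀ) v w = ∑ e, G.incMatrix R v e * G.incMatrix R w e := by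
        simp only [mul_apply, transpose_apply, hB_inc]
        exact hsum (fun e => G.incMatrix R v e * G.incMatrix R w e) fun e he => by
          simp [G.incMatrix_of_notMem_incidenceSet (fun h => he h.1)]
    _ = (G.incMatrix R * (G.incMatrix R)ᵀ) v w := by simp only [mul_apply, transpose_apply]
    _ = (G.degMatrix R + G.adjMatrix R) v w := by
      rw [incMatrix_mul_transpose]
      rcases eq_or_ne v w with rfl | hvw
      · simp [degMatrix]
      · simp [degMatrix, hvw, adjMatrix_apply]

end SimpleGraph

/-- The block `μ • 1 - !![2, -1; -1, 2]` of `μ • 1 - LRTMatrix r B L` on each pair `w₁ᵛ, w₂ᵛ`. -/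
def pairBlock (μ : ℝ) : Matrix (Fin 2) (Fin 2) ℝ := of fun k k' => if k = k' then μ - 2 else 1

theorem pairBlock_row_sum (μ : ℝ) (k : Fin 2) : ∑ k', pairBlock μ k k' = μ - 1 := by
  fin_cases k <;> simp [pairBlock, Fin.sum_univ_two] <;> ring

theorem det_pairBlock (μ : ℝ) : (pairBlock μ).det = (μ - 1) * (μ - 3) := by
  rw [det_fin_two]
  simp [pairBlock]
  ring

theorem smul_one_sub_LRTMatrix_eq_fromBlocks {n m : ℕ} (r : ℕ) (B : Matrix (Fin n) (Fin m) ℝ)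
    (L : Matrix (Fin n) (Fin n) ℝ) (μ : ℝ) :
    μ • 1 - LRTMatrix r B L
      = fromBlocks ((μ - 2) • 1) (fromCols Bᵀ 0) (fromRows B 0)
          (fromBlocks ((μ - (r + 2)) • 1 - L) (fstIndicator ℝ (Fin n) (Fin 2))
            (fstIndicator ℝ (Fin n) (Fin 2))ᵀ (1 ⊗ₖ pairBlock μ)) := by
  ext (a | v | ⟨w, k⟩) (b | v' | ⟨w', k'⟩) <;>
    simp [LRTMatrix, fstIndicator, pairBlock, one_apply, Prod.ext_iff] <;>
    split_ifs <;> simp_all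
  ring

theorem det_smul_one_sub_LRTMatrix {n m : ℕ} (r : ℕ) (B : Matrix (Fin n) (Fin m) ℝ)
    (L : Matrix (Fin n) (Fin n) ℝ) {μ : ℝ} (h1 : μ ≠ 1) (h2 : μ ≠ 2) (h3 : μ ≠ 3) :
    (μ • 1 - LRTMatrix r B L).det
      = (μ - 2) ^ m * ((μ - 1) * (μ - 3)) ^ n *
        ((μ - (r + 2)) • 1 - L - (μ - 2)⁻¹ • (B * Bᵀ) - (2 / (μ - 1)) • 1).det := by
  have hμ1 : μ - 1 ≠ 0 := sub_ne_zero.mpr h1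
  have hμ2 : μ - 2 ≠ 0 := sub_ne_zero.mpr h2
  have hμ3 : μ - 3 ≠ 0 := sub_ne_zero.mpr h3
  have hK : ((1 : Matrix (Fin n) (Fin n) ℝ) ⊗ₖ pairBlock μ).det = ((μ - 1) * (μ - 3)) ^ n := by
    rw [det_kronecker, det_pairBlock, det_one, one_pow, one_mul, Fintype.card_fin]
  have hF : (μ - 1)⁻¹ • (fstIndicator ℝ (Fin n) (Fin 2) * (fstIndicator ℝ (Fin n) (Fin 2))ᵀ)
      = (2 / (μ - 1)) • 1 := by
    rw [fstIndicator_mul_transpose, smul_smul]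
    norm_num [div_eq_inv_mul]
  rw [smul_one_sub_LRTMatrix_eq_fromBlocks,
    det_fromBlocks_of_mul_eq_smul₁₁ _ _ _ _ hμ2 (by simp [hμ2]) (by rw [smul_mul, Matrix.one_mul]),
    fromRows_mul_fromCols]
  simp only [det_smul, det_one, Fintype.card_fin, mul_one, Matrix.mul_zero, Matrix.zero_mul,
    fromBlocks_smul, smul_zero]
  rw [sub_eq_add_neg _ (fromBlocks _ 0 0 0), fromBlocks_neg, fromBlocks_add]
  simp only [neg_zero, add_zero, ← sub_eq_add_neg]
  rw [det_fromBlocks_of_mul_eq_smul₂₂ _ _ _ _ hμ1 (by simp [hK, hμ1, hμ3])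
    (one_kronecker_mul_transpose_fstIndicator _ (pairBlock_row_sum μ)), hK, hF, mul_assoc]

theorem RT_schurComplement_eq {E : Type*} [Ring E] [Algebra ℝ E] (r : ℕ) (A : E) {μ : ℝ}
    (h1 : μ ≠ 1) (h2 : μ ≠ 2) (h3 : μ ≠ 3) :
    (μ - (r + 2)) • 1 - ((r : ℝ) • 1 - A) - (μ - 2)⁻¹ • ((r : ℝ) • 1 + A) - (2 / (μ - 1)) • 1
      = ((3 - μ) / (μ - 2)) • (((μ - 2) ^ 2 / (3 - μ) + (r : ℝ) * (2 * μ - 3) / (μ - 3)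
              + 2 * (μ - 2) / ((μ - 1) * (μ - 3))) • 1 - A) := by
  have hμ1 : μ - 1 ≠ 0 := sub_ne_zero.mpr h1
  have hμ2 : μ - 2 ≠ 0 := sub_ne_zero.mpr h2
  have hμ3 : μ - 3 ≠ 0 := sub_ne_zero.mpr h3
  have h3μ : 3 - μ ≠ 0 := sub_ne_zero.mpr h3.symm
  match_scalars <;> field_simp <;> ring

theorem laplacian_polynomial_RT_adjacency_form_general {n m : ℕ} (r : ℕ)
    (G : SimpleGraph (Fin n)) [DecidableRel G.Adj]
    (hreg : G.IsRegularOfDegree r)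
    (φ : Fin m ≃ G.edgeSet) (B : Matrix (Fin n) (Fin m) ℝ)
    (hB : ∀ (v : Fin n) (j : Fin m), B v j = if v ∈ (φ j : Sym2 (Fin n)) then 1 else 0)
    (μ : ℝ) (h1 : μ ≠ 1) (h2 : μ ≠ 2) (h3 : μ ≠ 3) :
    (μ • (1 : Matrix (Fin m ⊕ Fin n ⊕ Fin n × Fin 2) (Fin m ⊕ Fin n ⊕ Fin n × Fin 2) ℝ)
        - LRTMatrix r B (G.lapMatrix ℝ)).det
      = (μ - 1) ^ n * (μ - 2) ^ ((m : ℤ) - (n : ℤ)) * (μ - 3) ^ n * (3 - μ) ^ n *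
        ((((μ - 2) ^ 2 / (3 - μ) + (r : ℝ) * (2 * μ - 3) / (μ - 3)
              + 2 * (μ - 2) / ((μ - 1) * (μ - 3)))
            • (1 : Matrix (Fin n) (Fin n) ℝ)) - G.adjMatrix ℝ).det := by
  have hμ2 : μ - 2 ≠ 0 := sub_ne_zero.mpr h2
  rw [det_smul_one_sub_LRTMatrix r B _ h1 h2 h3,
    G.mul_transpose_eq_degMatrix_add_adjMatrix φ B hB, G.lapMatrix_eq_of_isRegularOfDegree hreg,
    G.degMatrix_eq_smul_one_of_isRegularOfDegree hreg, RT_schurComplement_eq r _ h1 h2 h3,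
    det_smul, Fintype.card_fin, zpow_sub₀ hμ2, zpow_natCast, zpow_natCast, div_pow, mul_pow]
  ring

theorem laplacian_polynomial_RT_adjacency_form {n m : ℕ} (r : ℕ)
    (G : SimpleGraph (Fin n)) [DecidableRel G.Adj]
    (hconn : G.Connected) (hreg : G.IsRegularOfDegree r)
    (φ : Fin m ≃ G.edgeSet) (B : Matrix (Fin n) (Fin m) ℝ)
    (hB : ∀ (v : Fin n) (j : Fin m), B v j = if v ∈ (φ j : Sym2 (Fin n)) then 1 else 0)
    (μ : ℝ) (h1 : μ ≠ 1) (h2 : μ ≠ 2) (h3 : μ ≠ 3) :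
    (μ • (1 : Matrix (Fin m ⊕ Fin n ⊕ Fin n × Fin 2) (Fin m ⊕ Fin n ⊕ Fin n × Fin 2) ℝ)
        - LRTMatrix r B (G.lapMatrix ℝ)).det
      = (μ - 1) ^ n * (μ - 2) ^ ((m : ℤ) - (n : ℤ)) * (μ - 3) ^ n * (3 - μ) ^ n *
        ((((μ - 2) ^ 2 / (3 - μ) + (r : ℝ) * (2 * μ - 3) / (μ - 3)
              + 2 * (μ - 2) / ((μ - 1) * (μ - 3)))
            • (1 : Matrix (Fin n) (Fin n) ℝ)) - G.adjMatrix ℝ).det :=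
  laplacian_polynomial_RT_adjacency_form_general r G hreg φ B hB μ h1 h2 h3
end

section
/- Let G be a connected r-regular simple graph with n vertices and m edges, with incidence matrix B, adjacency matrix A(G) and Laplacian matrix L(G) = rI_n − A(G). For every real number μ with μ ≠ 1, μ ≠ 2 and μ ≠ 3, the determinant of the (m+n)×(m+n) block matrix S = [[(μ−2)I_m, Bᵀ], [B, (μ−r−2−2/(μ−1))I_n − L(G)]] satisfies det S = (μ−2)^(m−n) · (3−μ)^n · det( x·I_n − A(G) ), where x = (μ−2)²/(3−μ) + r(2μ−3)/(μ−3) + 2(μ−2)/((μ−1)(μ−3)). -/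
open Matrix SimpleGraph

theorem det_schur_complement_matrix_S {n m : ℕ} (r : ℕ)
    (G : SimpleGraph (Fin n)) [DecidableRel G.Adj]
    (hconn : G.Connected) (hreg : G.IsRegularOfDegree r)
    (φ : Fin m ≃ G.edgeSet) (B : Matrix (Fin n) (Fin m) ℝ)
    (hB : ∀ (v : Fin n) (j : Fin m), B v j = if v ∈ (φ j : Sym2 (Fin n)) then 1 else 0)
    (μ : ℝ) (h1 : μ ≠ 1) (h2 : μ ≠ 2) (h3 : μ ≠ 3) :
    (Matrix.fromBlocks
        ((μ - 2) • (1 : Matrix (Fin m) (Fin m) ℝ)) Bᵀ B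
        (((μ - (r : ℝ) - 2 - 2 / (μ - 1)) • (1 : Matrix (Fin n) (Fin n) ℝ))
          - G.lapMatrix ℝ)).det
      = (μ - 2) ^ ((m : ℤ) - (n : ℤ)) * (3 - μ) ^ n *
        ((((μ - 2) ^ 2 / (3 - μ) + (r : ℝ) * (2 * μ - 3) / (μ - 3)
              + 2 * (μ - 2) / ((μ - 1) * (μ - 3)))
            • (1 : Matrix (Fin n) (Fin n) ℝ)) - G.adjMatrix ℝ).det := by
  have hμ1 : μ - 1 ≠ 0 := sub_ne_zero.mpr h1
  have hμ2 : μ - 2 ≠ 0 := sub_ne_zero.mpr h2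
  have hμ3 : μ - 3 ≠ 0 := sub_ne_zero.mpr h3
  have h3μ : (3 : ℝ) - μ ≠ 0 := fun h => h3 (by linarith)
  set x : ℝ := (μ - 2) ^ 2 / (3 - μ) + (r : ℝ) * (2 * μ - 3) / (μ - 3)
      + 2 * (μ - 2) / ((μ - 1) * (μ - 3)) with hx
  -- B as incidence matrix
  have hinc : ∀ (v : Fin n) (j : Fin m), B v j = G.incMatrix ℝ v (φ j) := by
    intro v j
    rw [hB, incMatrix_apply']
    congr 1
    simp only [incidenceSet, Set.mem_setOf_eq, eq_iff_iff]
    exact ⟨fun h => ⟨(φ j).2, h⟩, fun h => h.2⟩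
  have hBBinc : B * Bᵀ = G.incMatrix ℝ * (G.incMatrix ℝ)ᵀ := by
    ext u v
    simp only [mul_apply, transpose_apply]
    rw [Fintype.sum_equiv φ _ (fun e : G.edgeSet => G.incMatrix ℝ u e * G.incMatrix ℝ v e)
      (fun j => by rw [hinc, hinc])]
    rw [Finset.sum_set_coe (f := fun e => G.incMatrix ℝ u e * G.incMatrix ℝ v e)]
    refine Finset.sum_subset (Finset.subset_univ _) (fun e _ he => ?_)
    rw [Set.mem_toFinset] at he
    rw [G.incMatrix_of_notMem_incidenceSet (fun h => he (G.incidenceSet_subset u h)), zero_mul]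
  have hBB : B * Bᵀ = (r : ℝ) • (1 : Matrix (Fin n) (Fin n) ℝ) + G.adjMatrix ℝ := by
    rw [hBBinc, incMatrix_mul_transpose]
    ext u v
    by_cases huv : u = v
    · subst huv
      simp [hreg u]
    · simp [huv, one_apply_ne huv]
  have hLap : G.lapMatrix ℝ = (r : ℝ) • (1 : Matrix (Fin n) (Fin n) ℝ) - G.adjMatrix ℝ := by
    rw [lapMatrix]
    congr 1
    ext u v
    by_cases huv : u = v
    · subst huv
      simp [degMatrix, hreg u]
    · simp [degMatrix, huv, one_apply_ne huv]
  -- invertibility of the top-left block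
  haveI : Invertible ((μ - 2) • (1 : Matrix (Fin m) (Fin m) ℝ)) :=
    ⟨(μ - 2)⁻¹ • (1 : Matrix (Fin m) (Fin m) ℝ),
      by rw [smul_mul_smul_comm, one_mul, inv_mul_cancel₀ hμ2, one_smul],
      by rw [smul_mul_smul_comm, one_mul, mul_inv_cancel₀ hμ2, one_smul]⟩
  have hinv : ⅟((μ - 2) • (1 : Matrix (Fin m) (Fin m) ℝ))
      = (μ - 2)⁻¹ • (1 : Matrix (Fin m) (Fin m) ℝ) :=
    invOf_eq_right_inv (by rw [smul_mul_smul_comm, one_mul, mul_inv_cancel₀ hμ2, one_smul])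
  rw [Matrix.det_fromBlocks₁₁, hinv]
  have hmul : B * ((μ - 2)⁻¹ • (1 : Matrix (Fin m) (Fin m) ℝ)) * Bᵀ
      = (μ - 2)⁻¹ • (B * Bᵀ) := by
    rw [Matrix.mul_smul, Matrix.mul_one, Matrix.smul_mul]
  -- the Schur complement
  have hschur : (((μ - (r : ℝ) - 2 - 2 / (μ - 1)) • (1 : Matrix (Fin n) (Fin n) ℝ))
        - G.lapMatrix ℝ) - B * ((μ - 2)⁻¹ • (1 : Matrix (Fin m) (Fin m) ℝ)) * Bᵀ
      = ((3 - μ) / (μ - 2)) • ((x • (1 : Matrix (Fin n) (Fin n) ℝ)) - G.adjMatrix ℝ) := by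
    rw [hmul, hBB, hLap]
    have hc : (μ - (r : ℝ) - 2 - 2 / (μ - 1)) - (r : ℝ) - (μ - 2)⁻¹ * (r : ℝ)
        = (3 - μ) / (μ - 2) * x := by
      rw [hx]
      field_simp
      ring
    have hd : (1 : ℝ) - (μ - 2)⁻¹ = -((3 - μ) / (μ - 2)) := by
      field_simp
      ring
    have step1 : ((μ - (r : ℝ) - 2 - 2 / (μ - 1)) • (1 : Matrix (Fin n) (Fin n) ℝ)
          - ((r : ℝ) • (1 : Matrix (Fin n) (Fin n) ℝ) - G.adjMatrix ℝ))
          - (μ - 2)⁻¹ • ((r : ℝ) • (1 : Matrix (Fin n) (Fin n) ℝ) + G.adjMatrix ℝ)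
        = ((μ - (r : ℝ) - 2 - 2 / (μ - 1)) - (r : ℝ) - (μ - 2)⁻¹ * (r : ℝ))
            • (1 : Matrix (Fin n) (Fin n) ℝ)
          + ((1 : ℝ) - (μ - 2)⁻¹) • G.adjMatrix ℝ := by
      module
    rw [step1, hc, hd]
    module
  rw [hschur]
  rw [Matrix.det_smul, Matrix.det_smul, Matrix.det_one, Fintype.card_fin, Fintype.card_fin,
    mul_one]
  rw [show ((μ - 2) ^ ((m : ℤ) - (n : ℤ)) : ℝ) = (μ - 2) ^ m / (μ - 2) ^ n by
    rw [zpow_sub₀ hμ2, zpow_natCast, zpow_natCast]]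
  rw [div_pow]
  field_simp
end

section
/- For the complete bipartite graph K_{n,n} with n ≥ 1 (which has 2n vertices and is r-regular with r = n), the Kirchhoff index of RT(K_{n,n}) is Kf(RT(K_{n,n})) = (r+6)²(4n−3)/6 + (r+5)n + (r+6)(10n−4)n/3 + (r−2)(r+6)n²/2, where r = n. -/
open Matrix SimpleGraph

/-- The graph `RT(G)`: each edge `e = (a,b)` of `G` gets a new vertex `e'` joined to `a`
and `b`, and each vertex `v` of `G` gets a new edge `(w₁ᵛ, w₂ᵛ)` with both endpoints
joined to `v`. -/
def RTGraph {V : Type*} (G : SimpleGraph V) :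
    SimpleGraph (G.edgeSet ⊕ V ⊕ V × Fin 2) :=
  SimpleGraph.fromRel fun a b =>
    match a, b with
    | Sum.inl e, Sum.inr (Sum.inl v) => v ∈ (e : Sym2 V)
    | Sum.inr (Sum.inl u), Sum.inr (Sum.inl v) => G.Adj u v
    | Sum.inr (Sum.inl v), Sum.inr (Sum.inr (w, _)) => v = w
    | Sum.inr (Sum.inr (w, j)), Sum.inr (Sum.inr (w', j')) => w = w' ∧ j ≠ j'
    | _, _ => False

/-- The Kirchhoff index of a graph on a finite vertex type: the number of vertices
times the sum of the reciprocals of the nonzero Laplacian eigenvalues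
(listed with multiplicity). -/
noncomputable def kirchhoffIndex {V : Type*} [Fintype V] (G : SimpleGraph V) : ℝ :=
  letI := Classical.decEq V
  letI : DecidableRel G.Adj := Classical.decRel _
  (Fintype.card V : ℝ) *
    ∑ i ∈ Finset.univ.filter
        (fun i => (G.posSemidef_lapMatrix ℝ).isHermitian.eigenvalues i ≠ 0),
      ((G.posSemidef_lapMatrix ℝ).isHermitian.eigenvalues i)⁻¹

instance {V W : Type*} : DecidableRel (completeBipartiteGraph V W).Adj := fun a b =>
  inferInstanceAs (Decidable (a.isLeft ∧ b.isRight ∨ a.isRight ∧ b.isLeft))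


lemma key_trace {V : Type*} [Fintype V] [DecidableEq V] (G : SimpleGraph V)
    [DecidableRel G.Adj] (H : Matrix V V ℝ)
    (h1 : H *ᵥ (fun _ => 1) = 0)
    (hHL : H * G.lapMatrix ℝ
      = 1 - (Fintype.card V : ℝ)⁻¹ • Matrix.of (fun _ _ => (1:ℝ))) :
    ∑ i ∈ Finset.univ.filter
        (fun i => (G.posSemidef_lapMatrix ℝ).isHermitian.eigenvalues i ≠ 0),
      ((G.posSemidef_lapMatrix ℝ).isHermitian.eigenvalues i)⁻¹ = H.trace := by
  classical
  set hL := (G.posSemidef_lapMatrix ℝ).isHermitian with hhL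
  set u : Matrix V V ℝ := (hL.eigenvectorUnitary : Matrix V V ℝ) with hu
  set μ := hL.eigenvalues with hμ
  have huu : star u * u = 1 :=
    (Matrix.mem_unitaryGroup_iff').mp (hL.eigenvectorUnitary).2
  have huu' : u * star u = 1 :=
    (Matrix.mem_unitaryGroup_iff).mp (hL.eigenvectorUnitary).2
  have hspec : G.lapMatrix ℝ = u * diagonal μ * star u := by
    have := hL.spectral_theorem
    rwa [RCLike.ofReal_real_eq_id, Function.id_comp] at this
  set P : Matrix V V ℝ := u * diagonal (fun i => (μ i)⁻¹) * star u with hP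
  have hmix : ∀ f g : V → ℝ,
      (u * diagonal f * star u) * (u * diagonal g * star u)
        = u * diagonal (fun i => f i * g i) * star u := by
    intro f g
    calc (u * diagonal f * star u) * (u * diagonal g * star u)
        = u * (diagonal f * (star u * u) * diagonal g) * star u := by
          simp only [Matrix.mul_assoc]
      _ = u * diagonal (fun i => f i * g i) * star u := by
          rw [huu, Matrix.mul_one, diagonal_mul_diagonal, Matrix.mul_assoc]
  have hLP : G.lapMatrix ℝ * P = u * diagonal (fun i => μ i * (μ i)⁻¹) * star u := by
    rw [hspec, hP, hmix]
  have hPL : P * G.lapMatrix ℝ = u * diagonal (fun i => μ i * (μ i)⁻¹) * star u := by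
    rw [hspec, hP, hmix]; congr 2; ext i; ring
  have hPsymm : P.transpose = P := by
    rw [hP, Matrix.transpose_mul, Matrix.transpose_mul, Matrix.star_eq_conjTranspose,
      Matrix.conjTranspose_eq_transpose_of_trivial, Matrix.transpose_transpose,
      diagonal_transpose, Matrix.mul_assoc]
  have hLone : G.lapMatrix ℝ *ᵥ (fun _ => 1) = 0 := G.lapMatrix_mulVec_const_eq_zero
  set y : V → ℝ := star u *ᵥ (fun _ => 1) with hy0
  have hy : ∀ i, μ i * y i = 0 := by
    have h2 : star u *ᵥ (G.lapMatrix ℝ *ᵥ (fun _ => 1)) = 0 := by rw [hLone]; simp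
    rw [hspec, ← Matrix.mulVec_mulVec, ← Matrix.mulVec_mulVec,
      Matrix.mulVec_mulVec, huu, Matrix.one_mulVec] at h2
    intro i
    have := congrFun h2 i
    simpa [mulVec_diagonal] using this
  have hPone : P *ᵥ (fun _ => 1) = 0 := by
    rw [hP, ← Matrix.mulVec_mulVec, ← Matrix.mulVec_mulVec, ← hy0]
    have hz : diagonal (fun i => (μ i)⁻¹) *ᵥ y = 0 := by
      funext i
      simp only [mulVec_diagonal, Pi.zero_apply]
      rcases eq_or_ne (μ i) 0 with h | h
      · rw [h]; simp
      · have hyi : y i = 0 := (mul_eq_zero.mp (hy i)).resolve_left h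
        rw [hyi, mul_zero]
    rw [hz]; simp
  -- J * P = 0
  set J : Matrix V V ℝ := Matrix.of (fun _ _ => (1:ℝ)) with hJ
  have hJP : J * P = 0 := by
    ext i j
    simp only [Matrix.mul_apply, hJ, Matrix.of_apply, one_mul, Matrix.zero_apply]
    have := congrFun hPone j
    simp only [Matrix.mulVec, dotProduct, mul_one, Pi.zero_apply] at this
    calc ∑ k, P k j = ∑ k, P j k := by
          refine Finset.sum_congr rfl fun k _ => ?_
          conv_lhs => rw [← hPsymm]
          rfl
      _ = 0 := this
  -- H * J = 0
  have hHJ : H * J = 0 := by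
    ext i j
    simp only [Matrix.mul_apply, hJ, Matrix.of_apply, mul_one, Matrix.zero_apply]
    have := congrFun h1 i
    simpa [Matrix.mulVec, dotProduct] using this
  -- Q := 1 - P * L satisfies L * Q = 0
  set Q : Matrix V V ℝ := 1 - P * G.lapMatrix ℝ with hQ
  have hLQ : G.lapMatrix ℝ * Q = 0 := by
    rw [hQ, Matrix.mul_sub, Matrix.mul_one, ← Matrix.mul_assoc, hLP, hspec, hmix]
    rw [sub_eq_zero]
    have hfun : (fun i => μ i * (μ i)⁻¹ * μ i) = μ := by
      funext i
      rcases eq_or_ne (μ i) 0 with h | h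
      · rw [h]; ring
      · field_simp
    rw [hfun]
  have hHQ : H * Q = 0 := by
    have h3 : Q = (Fintype.card V : ℝ)⁻¹ • (J * Q) := by
      have h4 : (H * G.lapMatrix ℝ) * Q
          = (1 - (Fintype.card V : ℝ)⁻¹ • J) * Q := by rw [hHL]
      rw [Matrix.mul_assoc, hLQ, Matrix.mul_zero, Matrix.sub_mul, Matrix.one_mul,
        Matrix.smul_mul] at h4
      exact sub_eq_zero.mp h4.symm
    rw [h3, Matrix.mul_smul, ← Matrix.mul_assoc, hHJ, Matrix.zero_mul, smul_zero]
  -- H = P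
  have hHeq : H = P := by
    have hone : P * G.lapMatrix ℝ + Q = 1 := by rw [hQ]; abel
    calc H = H * 1 := by rw [Matrix.mul_one]
      _ = H * (P * G.lapMatrix ℝ) + H * Q := by rw [← hone, Matrix.mul_add]
      _ = H * (G.lapMatrix ℝ * P) := by rw [hHQ, add_zero, hPL, ← hLP]
      _ = (H * G.lapMatrix ℝ) * P := by rw [Matrix.mul_assoc]
      _ = P - (Fintype.card V : ℝ)⁻¹ • (J * P) := by
          rw [hHL, Matrix.sub_mul, Matrix.one_mul, Matrix.smul_mul]
      _ = P := by rw [hJP, smul_zero, sub_zero]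
  -- conclude
  have htr : H.trace = ∑ i, (μ i)⁻¹ := by
    rw [hHeq, hP, Matrix.trace_mul_cycle, huu, Matrix.one_mul, Matrix.trace_diagonal]
  rw [htr]
  rw [Finset.sum_filter]
  refine Finset.sum_congr rfl fun i _ => ?_
  rcases eq_or_ne (μ i) 0 with h | h
  · simp [h]
  · simp [h]

namespace RTP

variable {n : ℕ}

abbrev Vn (n : ℕ) := Fin n ⊕ Fin n
abbrev Gn (n : ℕ) := completeBipartiteGraph (Fin n) (Fin n)
abbrev Xn (n : ℕ) := (Gn n).edgeSet ⊕ Vn n ⊕ Vn n × Fin 2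

def ed (a b : Fin n) : (Gn n).edgeSet :=
  ⟨s(Sum.inl a, Sum.inr b), by simp [SimpleGraph.mem_edgeSet]⟩

lemma ed_inj {a b c d : Fin n} : ed a b = ed c d ↔ a = c ∧ b = d := by
  constructor
  · intro h
    have h2 : s(Sum.inl a, Sum.inr b) = s((Sum.inl c : Vn n), Sum.inr d) :=
      congrArg Subtype.val h
    rw [Sym2.eq_iff] at h2
    rcases h2 with ⟨h3, h4⟩ | ⟨h3, h4⟩ <;> simp_all
  · rintro ⟨rfl, rfl⟩; rfl

lemma ed_surj (e : (Gn n).edgeSet) : ∃ a b, e = ed a b := by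
  obtain ⟨s, hs⟩ := e
  induction s using Sym2.ind with
  | _ x y =>
    rw [SimpleGraph.mem_edgeSet] at hs
    rcases x with a | b <;> rcases y with a' | b'
    · simp [completeBipartiteGraph] at hs
    · exact ⟨a, b', by simp [ed]⟩
    · refine ⟨a', b, ?_⟩
      simp only [ed, Subtype.mk.injEq]
      exact Sym2.eq_swap
    · simp [completeBipartiteGraph] at hs
  done

lemma ed_bij : Function.Bijective (fun p : Fin n × Fin n => ed p.1 p.2) := by
  constructor
  · rintro ⟨a, b⟩ ⟨c, d⟩ h
    have := ed_inj.mp h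
    simp_all [Prod.ext_iff]
  · intro e
    obtain ⟨a, b, h⟩ := ed_surj e
    exact ⟨(a, b), h.symm⟩

lemma card_edgeSet : Fintype.card (Gn n).edgeSet = n * n := by
  rw [← Fintype.card_of_bijective ed_bij]
  simp

lemma mem_ed {x : Vn n} {a b : Fin n} :
    x ∈ (ed a b : Sym2 (Vn n)) ↔ x = Sum.inl a ∨ x = Sum.inr b := by
  simp [ed]

-- adjacency lemmas
section adj
variable {V : Type*} {G : SimpleGraph V}

lemma adj_ee {e f : G.edgeSet} : ¬ (RTGraph G).Adj (Sum.inl e) (Sum.inl f) := by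
  simp [RTGraph, SimpleGraph.fromRel_adj]

lemma adj_eo {e : G.edgeSet} {v : V} :
    (RTGraph G).Adj (Sum.inl e) (Sum.inr (Sum.inl v)) ↔ v ∈ (e : Sym2 V) := by
  simp [RTGraph, SimpleGraph.fromRel_adj]

lemma adj_oe {e : G.edgeSet} {v : V} :
    (RTGraph G).Adj (Sum.inr (Sum.inl v)) (Sum.inl e) ↔ v ∈ (e : Sym2 V) := by
  rw [SimpleGraph.adj_comm]; exact adj_eo

lemma adj_ep {e : G.edgeSet} {p : V × Fin 2} :
    ¬ (RTGraph G).Adj (Sum.inl e) (Sum.inr (Sum.inr p)) := by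
  simp [RTGraph, SimpleGraph.fromRel_adj]

lemma adj_pe {e : G.edgeSet} {p : V × Fin 2} :
    ¬ (RTGraph G).Adj (Sum.inr (Sum.inr p)) (Sum.inl e) := by
  rw [SimpleGraph.adj_comm]; exact adj_ep

lemma adj_oo {u v : V} :
    (RTGraph G).Adj (Sum.inr (Sum.inl u)) (Sum.inr (Sum.inl v)) ↔ G.Adj u v := by
  constructor
  · intro h
    rcases (SimpleGraph.fromRel_adj _ _ _).mp h with ⟨_, h2 | h2⟩
    · exact h2
    · exact h2.symm
  · intro h
    exact (SimpleGraph.fromRel_adj _ _ _).mpr ⟨by simp [h.ne], Or.inl h⟩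

lemma adj_op {v w : V} {j : Fin 2} :
    (RTGraph G).Adj (Sum.inr (Sum.inl v)) (Sum.inr (Sum.inr (w, j))) ↔ v = w := by
  simp [RTGraph, SimpleGraph.fromRel_adj]

lemma adj_po {v w : V} {j : Fin 2} :
    (RTGraph G).Adj (Sum.inr (Sum.inr (w, j))) (Sum.inr (Sum.inl v)) ↔ v = w := by
  rw [SimpleGraph.adj_comm]; exact adj_op

lemma adj_pp {w w' : V} {j j' : Fin 2} :
    (RTGraph G).Adj (Sum.inr (Sum.inr (w, j))) (Sum.inr (Sum.inr (w', j')))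
      ↔ w = w' ∧ j ≠ j' := by
  constructor
  · intro h
    rcases (SimpleGraph.fromRel_adj _ _ _).mp h with ⟨hne, h2 | h2⟩
    · exact h2
    · exact ⟨h2.1.symm, h2.2.symm⟩
  · rintro ⟨rfl, hj⟩
    exact (SimpleGraph.fromRel_adj _ _ _).mpr ⟨by simp [hj], Or.inl ⟨rfl, hj⟩⟩

end adj

lemma card_Xn : Fintype.card (Xn n) = n * n + 6 * n := by
  rw [Fintype.card_sum, Fintype.card_sum, Fintype.card_prod, card_edgeSet]
  simp only [Fintype.card_sum, Fintype.card_fin, Fintype.card_prod]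
  simp
  ring

end RTP

namespace RTP
noncomputable section
open Sum

def Dd (n : ℕ) : ℝ := 6 * ((n:ℝ)^2 + 6*(n:ℝ))^2
def p0 (n : ℕ) : ℝ := (3*(n:ℝ)^4 + 38*(n:ℝ)^3 + 127*(n:ℝ)^2 + 36*(n:ℝ) - 72) / Dd n
def p1 (n : ℕ) : ℝ := ((n:ℝ)^3 + 7*(n:ℝ)^2 - 72) / Dd n
def p2 (n : ℕ) : ℝ := (-5*(n:ℝ)^2 - 36*(n:ℝ) - 72) / Dd n
def q1 (n : ℕ) : ℝ := (2*(n:ℝ)^3 + 22*(n:ℝ)^2 + 54*(n:ℝ) - 72) / Dd n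
def q2 (n : ℕ) : ℝ := (-2*(n:ℝ)^2 - 18*(n:ℝ) - 72) / Dd n
def s1 (n : ℕ) : ℝ := (2*(n:ℝ)^3 + 16*(n:ℝ)^2 + 18*(n:ℝ) - 72) / Dd n
def s2 (n : ℕ) : ℝ := (-8*(n:ℝ)^2 - 54*(n:ℝ) - 72) / Dd n
def t0 (n : ℕ) : ℝ := (4*(n:ℝ)^3 + 48*(n:ℝ)^2 + 132*(n:ℝ) - 108) / Dd n
def t1 (n : ℕ) : ℝ := (2*(n:ℝ)^2 + 12*(n:ℝ) - 36) / Dd n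
def t2 (n : ℕ) : ℝ := (-12*(n:ℝ) - 108) / Dd n
def u0 (n : ℕ) : ℝ := (4*(n:ℝ)^3 + 42*(n:ℝ)^2 + 96*(n:ℝ) - 108) / Dd n
def u1 (n : ℕ) : ℝ := (-6*(n:ℝ)^2 - 48*(n:ℝ) - 108) / Dd n
def u2 (n : ℕ) : ℝ := (-4*(n:ℝ)^2 - 24*(n:ℝ) - 36) / Dd n
def z0 (n : ℕ) : ℝ := (4*(n:ℝ)^4 + 52*(n:ℝ)^3 + 180*(n:ℝ)^2 + 60*(n:ℝ) - 108) / Dd n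
def z1 (n : ℕ) : ℝ := (2*(n:ℝ)^4 + 28*(n:ℝ)^3 + 108*(n:ℝ)^2 + 60*(n:ℝ) - 108) / Dd n
def z2 (n : ℕ) : ℝ := (-12*(n:ℝ)^2 - 84*(n:ℝ) - 108) / Dd n
def z3 (n : ℕ) : ℝ := (-10*(n:ℝ)^2 - 60*(n:ℝ) - 36) / Dd n

open Classical in
def Hm (n : ℕ) : Matrix (Xn n) (Xn n) ℝ :=
  Matrix.of fun x y =>
    match x, y with
    | inl e, inl f =>
        if e = f then p0 n
        else if ∃ v, v ∈ (e : Sym2 (Vn n)) ∧ v ∈ (f : Sym2 (Vn n)) then p1 n else p2 n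
    | inl e, inr (inl v) => if v ∈ (e : Sym2 (Vn n)) then q1 n else q2 n
    | inl e, inr (inr (w, _)) => if w ∈ (e : Sym2 (Vn n)) then s1 n else s2 n
    | inr (inl v), inl e => if v ∈ (e : Sym2 (Vn n)) then q1 n else q2 n
    | inr (inr (w, _)), inl e => if w ∈ (e : Sym2 (Vn n)) then s1 n else s2 n
    | inr (inl u), inr (inl v) =>
        if u = v then t0 n else if u.isLeft = v.isLeft then t2 n else t1 n
    | inr (inl v), inr (inr (w, _)) =>
        if v = w then u0 n else if v.isLeft = w.isLeft then u1 n else u2 n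
    | inr (inr (w, _)), inr (inl v) =>
        if v = w then u0 n else if v.isLeft = w.isLeft then u1 n else u2 n
    | inr (inr (w, j)), inr (inr (w', j')) =>
        if w = w' then (if j = j' then z0 n else z1 n)
        else if w.isLeft = w'.isLeft then z2 n else z3 n

variable {n : ℕ}

lemma shares_iff {a b c d : Fin n} :
    (∃ v, v ∈ (ed a b : Sym2 (Vn n)) ∧ v ∈ (ed c d : Sym2 (Vn n))) ↔ (a = c ∨ b = d) := by
  simp only [mem_ed]
  constructor
  · rintro ⟨v, hv1 | hv1, hv2 | hv2⟩ <;> subst hv1 <;> simp_all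
  · rintro (rfl | rfl)
    · exact ⟨inl a, Or.inl rfl, Or.inl rfl⟩
    · exact ⟨inr b, Or.inr rfl, Or.inr rfl⟩

-- Edge–Edge
lemma Hee_same {a b : Fin n} : Hm n (inl (ed a b)) (inl (ed a b)) = p0 n := by
  simp [Hm]
lemma Hee_shL {a b d : Fin n} (h : b ≠ d) :
    Hm n (inl (ed a b)) (inl (ed a d)) = p1 n := by
  have h1 : ¬ (ed a b = ed a d) := by rw [ed_inj]; tauto
  have h2 : ∃ v, v ∈ (ed a b : Sym2 (Vn n)) ∧ v ∈ (ed a d : Sym2 (Vn n)) :=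
    shares_iff.mpr (Or.inl rfl)
  simp only [Hm, Matrix.of_apply]
  rw [if_neg h1, if_pos h2]
lemma Hee_shR {a b c : Fin n} (h : a ≠ c) :
    Hm n (inl (ed a b)) (inl (ed c b)) = p1 n := by
  have h1 : ¬ (ed a b = ed c b) := by rw [ed_inj]; tauto
  have h2 : ∃ v, v ∈ (ed a b : Sym2 (Vn n)) ∧ v ∈ (ed c b : Sym2 (Vn n)) :=
    shares_iff.mpr (Or.inr rfl)
  simp only [Hm, Matrix.of_apply]
  rw [if_neg h1, if_pos h2]
lemma Hee_disj {a b c d : Fin n} (h1 : a ≠ c) (h2 : b ≠ d) :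
    Hm n (inl (ed a b)) (inl (ed c d)) = p2 n := by
  have h3 : ¬ (ed a b = ed c d) := by rw [ed_inj]; tauto
  have h4 : ¬ ∃ v, v ∈ (ed a b : Sym2 (Vn n)) ∧ v ∈ (ed c d : Sym2 (Vn n)) := by
    rw [shares_iff]; tauto
  simp only [Hm, Matrix.of_apply]
  rw [if_neg h3, if_neg h4]

-- Edge–Orig and Orig–Edge
lemma Heo_Leq {a b : Fin n} : Hm n (inl (ed a b)) (inr (inl (inl a))) = q1 n := by
  simp [Hm, mem_ed]
lemma Heo_Lne {a b c : Fin n} (h : c ≠ a) :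
    Hm n (inl (ed a b)) (inr (inl (inl c))) = q2 n := by
  simp [Hm, mem_ed, h]
lemma Heo_Req {a b : Fin n} : Hm n (inl (ed a b)) (inr (inl (inr b))) = q1 n := by
  simp [Hm, mem_ed]
lemma Heo_Rne {a b d : Fin n} (h : d ≠ b) :
    Hm n (inl (ed a b)) (inr (inl (inr d))) = q2 n := by
  simp [Hm, mem_ed, h]
lemma Hoe_Leq {a b : Fin n} : Hm n (inr (inl (inl a))) (inl (ed a b)) = q1 n := by
  simp [Hm, mem_ed]
lemma Hoe_Lne {a b c : Fin n} (h : c ≠ a) :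
    Hm n (inr (inl (inl c))) (inl (ed a b)) = q2 n := by
  simp [Hm, mem_ed, h]
lemma Hoe_Req {a b : Fin n} : Hm n (inr (inl (inr b))) (inl (ed a b)) = q1 n := by
  simp [Hm, mem_ed]
lemma Hoe_Rne {a b d : Fin n} (h : d ≠ b) :
    Hm n (inr (inl (inr d))) (inl (ed a b)) = q2 n := by
  simp [Hm, mem_ed, h]

-- Edge–Pend and Pend–Edge
lemma Hep_Leq {a b : Fin n} {j : Fin 2} :
    Hm n (inl (ed a b)) (inr (inr (inl a, j))) = s1 n := by simp [Hm, mem_ed]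
lemma Hep_Lne {a b c : Fin n} {j : Fin 2} (h : c ≠ a) :
    Hm n (inl (ed a b)) (inr (inr (inl c, j))) = s2 n := by simp [Hm, mem_ed, h]
lemma Hep_Req {a b : Fin n} {j : Fin 2} :
    Hm n (inl (ed a b)) (inr (inr (inr b, j))) = s1 n := by simp [Hm, mem_ed]
lemma Hep_Rne {a b d : Fin n} {j : Fin 2} (h : d ≠ b) :
    Hm n (inl (ed a b)) (inr (inr (inr d, j))) = s2 n := by simp [Hm, mem_ed, h]
lemma Hpe_Leq {a b : Fin n} {j : Fin 2} :
    Hm n (inr (inr (inl a, j))) (inl (ed a b)) = s1 n := by simp [Hm, mem_ed]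
lemma Hpe_Lne {a b c : Fin n} {j : Fin 2} (h : c ≠ a) :
    Hm n (inr (inr (inl c, j))) (inl (ed a b)) = s2 n := by simp [Hm, mem_ed, h]
lemma Hpe_Req {a b : Fin n} {j : Fin 2} :
    Hm n (inr (inr (inr b, j))) (inl (ed a b)) = s1 n := by simp [Hm, mem_ed]
lemma Hpe_Rne {a b d : Fin n} {j : Fin 2} (h : d ≠ b) :
    Hm n (inr (inr (inr d, j))) (inl (ed a b)) = s2 n := by simp [Hm, mem_ed, h]

-- Orig–Orig
lemma Hoo_eq {v : Vn n} : Hm n (inr (inl v)) (inr (inl v)) = t0 n := by simp [Hm]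
lemma Hoo_LL {a c : Fin n} (h : a ≠ c) :
    Hm n (inr (inl (inl a))) (inr (inl (inl c))) = t2 n := by simp [Hm, h]
lemma Hoo_RR {b d : Fin n} (h : b ≠ d) :
    Hm n (inr (inl (inr b))) (inr (inl (inr d))) = t2 n := by simp [Hm, h]
lemma Hoo_LR {a d : Fin n} :
    Hm n (inr (inl (inl a))) (inr (inl (inr d))) = t1 n := by simp [Hm]
lemma Hoo_RL {b c : Fin n} :
    Hm n (inr (inl (inr b))) (inr (inl (inl c))) = t1 n := by simp [Hm]

-- Orig–Pend and Pend–Orig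
lemma Hop_eq {v : Vn n} {j : Fin 2} : Hm n (inr (inl v)) (inr (inr (v, j))) = u0 n := by
  simp [Hm]
lemma Hop_LL {a c : Fin n} {j : Fin 2} (h : a ≠ c) :
    Hm n (inr (inl (inl a))) (inr (inr (inl c, j))) = u1 n := by simp [Hm, h]
lemma Hop_RR {b d : Fin n} {j : Fin 2} (h : b ≠ d) :
    Hm n (inr (inl (inr b))) (inr (inr (inr d, j))) = u1 n := by simp [Hm, h]
lemma Hop_LR {a d : Fin n} {j : Fin 2} :
    Hm n (inr (inl (inl a))) (inr (inr (inr d, j))) = u2 n := by simp [Hm]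
lemma Hop_RL {b c : Fin n} {j : Fin 2} :
    Hm n (inr (inl (inr b))) (inr (inr (inl c, j))) = u2 n := by simp [Hm]
lemma Hpo_eq {v : Vn n} {j : Fin 2} : Hm n (inr (inr (v, j))) (inr (inl v)) = u0 n := by
  simp [Hm]
lemma Hpo_LL {a c : Fin n} {j : Fin 2} (h : a ≠ c) :
    Hm n (inr (inr (inl c, j))) (inr (inl (inl a))) = u1 n := by simp [Hm, h]
lemma Hpo_RR {b d : Fin n} {j : Fin 2} (h : b ≠ d) :
    Hm n (inr (inr (inr d, j))) (inr (inl (inr b))) = u1 n := by simp [Hm, h]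
lemma Hpo_LR {a d : Fin n} {j : Fin 2} :
    Hm n (inr (inr (inr d, j))) (inr (inl (inl a))) = u2 n := by simp [Hm]
lemma Hpo_RL {b c : Fin n} {j : Fin 2} :
    Hm n (inr (inr (inl c, j))) (inr (inl (inr b))) = u2 n := by simp [Hm]

-- Pend–Pend
lemma Hpp_eq {w : Vn n} {j : Fin 2} : Hm n (inr (inr (w, j))) (inr (inr (w, j))) = z0 n := by
  simp [Hm]
lemma Hpp_tw {w : Vn n} {j j' : Fin 2} (h : j ≠ j') :
    Hm n (inr (inr (w, j))) (inr (inr (w, j'))) = z1 n := by simp [Hm, h]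
lemma Hpp_LL {a c : Fin n} {j j' : Fin 2} (h : a ≠ c) :
    Hm n (inr (inr (inl a, j))) (inr (inr (inl c, j'))) = z2 n := by simp [Hm, h]
lemma Hpp_RR {b d : Fin n} {j j' : Fin 2} (h : b ≠ d) :
    Hm n (inr (inr (inr b, j))) (inr (inr (inr d, j'))) = z2 n := by simp [Hm, h]
lemma Hpp_LR {a d : Fin n} {j j' : Fin 2} :
    Hm n (inr (inr (inl a, j))) (inr (inr (inr d, j'))) = z3 n := by simp [Hm]
lemma Hpp_RL {b c : Fin n} {j j' : Fin 2} :
    Hm n (inr (inr (inr b, j))) (inr (inr (inl c, j'))) = z3 n := by simp [Hm]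

end
end RTP

namespace RTP
open Sum
variable {n : ℕ}

lemma sum_collapse {α : Type*} [Fintype α] [DecidableEq α] (c : α) (g : α → ℝ) :
    (∑ x : α, if x = c then g x else 0) = g c := by
  rw [Finset.sum_ite_eq' Finset.univ c g]; simp

lemma sum_ite_count {x y : ℝ} (b0 : Fin n) :
    (∑ b : Fin n, if b = b0 then x else y) = x + ((n:ℝ) - 1) * y := by
  have h : ∀ b : Fin n, (if b = b0 then x else y) = (if b = b0 then x - y else 0) + y := by
    intro b; by_cases hb : b = b0 <;> simp [hb]
  rw [Finset.sum_congr rfl fun b _ => h b, Finset.sum_add_distrib,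
    sum_collapse b0 (fun _ => x - y)]
  simp
  ring

lemma sum_const_real {y : ℝ} : (∑ _b : Fin n, y) = (n:ℝ) * y := by
  simp [mul_comm]

def RTn (n : ℕ) : SimpleGraph (Xn n) := RTGraph (Gn n)

lemma sum_adj_edge [DecidableRel (RTn n).Adj] (f : Xn n → ℝ) (c d : Fin n) :
    (∑ x : Xn n, if (RTn n).Adj x (inl (ed c d)) then f x else 0)
      = f (inr (inl (inl c))) + f (inr (inl (inr d))) := by
  rw [Fintype.sum_sum_type, Fintype.sum_sum_type]
  have h1 : (∑ e : (Gn n).edgeSet, if (RTn n).Adj (inl e) (inl (ed c d)) then f (inl e) else 0)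
      = 0 := by
    apply Finset.sum_eq_zero; intro e _; simp [RTn, adj_ee]
  have h3 : (∑ p : Vn n × Fin 2,
      if (RTn n).Adj (inr (inr p)) (inl (ed c d)) then f (inr (inr p)) else 0) = 0 := by
    apply Finset.sum_eq_zero; intro p _; simp [RTn, adj_pe]
  rw [h1, h3, zero_add, add_zero]
  rw [Fintype.sum_sum_type]
  have h4 : ∀ v : Vn n, ((RTn n).Adj (inr (inl v)) (inl (ed c d))
      ↔ (v = inl c ∨ v = inr d)) := by
    intro v; rw [RTn, adj_oe, mem_ed]
  have h5 : (∑ a : Fin n,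
        if (RTn n).Adj (inr (inl (inl a))) (inl (ed c d)) then f (inr (inl (inl a))) else 0)
      = f (inr (inl (inl c))) := by
    rw [Finset.sum_congr rfl fun a _ => by
      rw [if_congr (h4 (inl a)) rfl rfl]]
    simp only [inl.injEq, reduceCtorEq, or_false]
    exact sum_collapse c (fun a => f (inr (inl (inl a))))
  have h6 : (∑ b : Fin n,
        if (RTn n).Adj (inr (inl (inr b))) (inl (ed c d)) then f (inr (inl (inr b))) else 0)
      = f (inr (inl (inr d))) := by
    rw [Finset.sum_congr rfl fun b _ => by
      rw [if_congr (h4 (inr b)) rfl rfl]]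
    simp only [inr.injEq, reduceCtorEq, false_or]
    exact sum_collapse d (fun b => f (inr (inl (inr b))))
  rw [h5, h6]

def oth (j : Fin 2) : Fin 2 := 1 - j

lemma oth_ne (j : Fin 2) : oth j ≠ j := by fin_cases j <;> decide

lemma sum_adj_pend [DecidableRel (RTn n).Adj] (f : Xn n → ℝ) (w : Vn n) (j : Fin 2) :
    (∑ x : Xn n, if (RTn n).Adj x (inr (inr (w, j))) then f x else 0)
      = f (inr (inl w)) + f (inr (inr (w, oth j))) := by
  rw [Fintype.sum_sum_type, Fintype.sum_sum_type]
  have h1 : (∑ e : (Gn n).edgeSet,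
      if (RTn n).Adj (inl e) (inr (inr (w, j))) then f (inl e) else 0) = 0 := by
    apply Finset.sum_eq_zero; intro e _; simp [RTn, adj_ep]
  rw [h1, zero_add]
  have h2' : ∀ v : Vn n, ((RTn n).Adj (inr (inl v)) (inr (inr (w, j))) ↔ v = w) :=
    fun v => adj_op
  have h2 : (∑ v : Vn n,
      if (RTn n).Adj (inr (inl v)) (inr (inr (w, j))) then f (inr (inl v)) else 0)
      = f (inr (inl w)) := by
    rw [Finset.sum_congr rfl fun v _ => by rw [if_congr (h2' v) rfl rfl]]
    exact sum_collapse w (fun v => f (inr (inl v)))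
  rw [h2]
  congr 1
  rw [Fintype.sum_prod_type]
  have h3 : ∀ (w' : Vn n) (j' : Fin 2), ((RTn n).Adj (inr (inr (w', j'))) (inr (inr (w, j)))
      ↔ (w' = w ∧ j' ≠ j)) := fun w' j' => adj_pp
  have h4 : ∀ w' : Vn n,
      (∑ j' : Fin 2,
        if (RTn n).Adj (inr (inr (w', j'))) (inr (inr (w, j)))
        then f (inr (inr (w', j'))) else 0)
      = (if w' = w then f (inr (inr (w', oth j))) else 0) := by
    intro w'
    rw [Finset.sum_congr rfl fun j' _ => by rw [if_congr (h3 w' j') rfl rfl]]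
    by_cases hw : w' = w
    · subst hw
      simp only [true_and, if_pos rfl]
      fin_cases j <;> simp [Fin.sum_univ_two, oth]
    · simp [hw]
  rw [Finset.sum_congr rfl fun w' _ => h4 w']
  exact sum_collapse w (fun w' => f (inr (inr (w', oth j))))

lemma sum_adj_origL [DecidableRel (RTn n).Adj] (f : Xn n → ℝ) (c : Fin n) :
    (∑ x : Xn n, if (RTn n).Adj x (inr (inl (inl c))) then f x else 0)
      = (∑ b : Fin n, f (inl (ed c b))) + (∑ b : Fin n, f (inr (inl (inr b))))
        + (f (inr (inr (inl c, 0))) + f (inr (inr (inl c, 1)))) := by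
  rw [Fintype.sum_sum_type, Fintype.sum_sum_type]
  have h1 : (∑ e : (Gn n).edgeSet,
        if (RTn n).Adj (inl e) (inr (inl (inl c))) then f (inl e) else 0)
      = ∑ b : Fin n, f (inl (ed c b)) := by
    have hbij : (∑ e : (Gn n).edgeSet,
          if (RTn n).Adj (inl e) (inr (inl (inl c))) then f (inl e) else 0)
        = ∑ a : Fin n, ∑ b : Fin n,
          (if (RTn n).Adj (inl (ed a b)) (inr (inl (inl c))) then f (inl (ed a b)) else 0) := by
      exact ((Fintype.sum_bijective _ ed_bij _ _ (fun p => rfl)).symm).trans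
        (Fintype.sum_prod_type _)
    rw [hbij]
    have hiff : ∀ a b : Fin n, ((RTn n).Adj (inl (ed a b)) (inr (inl (inl c))) ↔ a = c) := by
      intro a b
      rw [RTn, adj_eo, mem_ed]
      simp [eq_comm]
    rw [Finset.sum_congr rfl fun a _ => Finset.sum_congr rfl fun b _ => by
      rw [if_congr (hiff a b) rfl rfl]]
    have hcol : ∀ b : Fin n, (∑ a : Fin n, if a = c then f (inl (ed a b)) else 0)
        = f (inl (ed c b)) := fun b => sum_collapse c (fun a => f (inl (ed a b)))
    rw [Finset.sum_comm]
    exact Finset.sum_congr rfl fun b _ => hcol b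
  have h2 : (∑ v : Vn n,
        if (RTn n).Adj (inr (inl v)) (inr (inl (inl c))) then f (inr (inl v)) else 0)
      = ∑ b : Fin n, f (inr (inl (inr b))) := by
    rw [Fintype.sum_sum_type]
    have hL : ∀ a : Fin n, ¬ (RTn n).Adj (inr (inl (inl a))) (inr (inl (inl c))) := by
      intro a h
      rw [RTn, adj_oo] at h
      simp [completeBipartiteGraph] at h
    have hR : ∀ b : Fin n, (RTn n).Adj (inr (inl (inr b))) (inr (inl (inl c))) := by
      intro b
      rw [RTn, adj_oo]
      simp [completeBipartiteGraph]
    rw [Finset.sum_congr rfl fun a _ => if_neg (hL a),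
      Finset.sum_congr rfl fun b _ => if_pos (hR b)]
    simp
  have h3 : (∑ p : Vn n × Fin 2,
        if (RTn n).Adj (inr (inr p)) (inr (inl (inl c))) then f (inr (inr p)) else 0)
      = f (inr (inr (inl c, 0))) + f (inr (inr (inl c, 1))) := by
    rw [Fintype.sum_prod_type]
    have hiff : ∀ (w' : Vn n) (j' : Fin 2),
        ((RTn n).Adj (inr (inr (w', j'))) (inr (inl (inl c))) ↔ w' = inl c) := by
      intro w' j'
      rw [RTn, adj_po, eq_comm]
    have hstep : ∀ w' : Vn n,
        (∑ j' : Fin 2,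
          if (RTn n).Adj (inr (inr (w', j'))) (inr (inl (inl c))) then f (inr (inr (w', j'))) else 0)
        = if w' = inl c then f (inr (inr (w', 0))) + f (inr (inr (w', 1))) else 0 := by
      intro w'
      rw [Finset.sum_congr rfl fun j' _ => by rw [if_congr (hiff w' j') rfl rfl]]
      by_cases hw : w' = inl c
      · simp [hw, Fin.sum_univ_two]
      · simp [hw]
    rw [Finset.sum_congr rfl fun w' _ => hstep w']
    exact sum_collapse (inl c) (fun w' => f (inr (inr (w', 0))) + f (inr (inr (w', 1))))
  rw [h1, h2, h3]
  ring

lemma sum_adj_origR [DecidableRel (RTn n).Adj] (f : Xn n → ℝ) (d : Fin n) :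
    (∑ x : Xn n, if (RTn n).Adj x (inr (inl (inr d))) then f x else 0)
      = (∑ a : Fin n, f (inl (ed a d))) + (∑ a : Fin n, f (inr (inl (inl a))))
        + (f (inr (inr (inr d, 0))) + f (inr (inr (inr d, 1)))) := by
  rw [Fintype.sum_sum_type, Fintype.sum_sum_type]
  have h1 : (∑ e : (Gn n).edgeSet,
        if (RTn n).Adj (inl e) (inr (inl (inr d))) then f (inl e) else 0)
      = ∑ a : Fin n, f (inl (ed a d)) := by
    have hbij : (∑ e : (Gn n).edgeSet,
          if (RTn n).Adj (inl e) (inr (inl (inr d))) then f (inl e) else 0)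
        = ∑ a : Fin n, ∑ b : Fin n,
          (if (RTn n).Adj (inl (ed a b)) (inr (inl (inr d))) then f (inl (ed a b)) else 0) := by
      exact ((Fintype.sum_bijective _ ed_bij _ _ (fun p => rfl)).symm).trans
        (Fintype.sum_prod_type _)
    rw [hbij]
    have hiff : ∀ a b : Fin n, ((RTn n).Adj (inl (ed a b)) (inr (inl (inr d))) ↔ b = d) := by
      intro a b
      rw [RTn, adj_eo, mem_ed]
      simp [eq_comm]
    rw [Finset.sum_congr rfl fun a _ => Finset.sum_congr rfl fun b _ => by
      rw [if_congr (hiff a b) rfl rfl]]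
    exact Finset.sum_congr rfl fun a _ => sum_collapse d (fun b => f (inl (ed a b)))
  have h2 : (∑ v : Vn n,
        if (RTn n).Adj (inr (inl v)) (inr (inl (inr d))) then f (inr (inl v)) else 0)
      = ∑ a : Fin n, f (inr (inl (inl a))) := by
    rw [Fintype.sum_sum_type]
    have hL : ∀ a : Fin n, (RTn n).Adj (inr (inl (inl a))) (inr (inl (inr d))) := by
      intro a
      rw [RTn, adj_oo]
      simp [completeBipartiteGraph]
    have hR : ∀ b : Fin n, ¬ (RTn n).Adj (inr (inl (inr b))) (inr (inl (inr d))) := by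
      intro b h
      rw [RTn, adj_oo] at h
      simp [completeBipartiteGraph] at h
    rw [Finset.sum_congr rfl fun a _ => if_pos (hL a),
      Finset.sum_congr rfl fun b _ => if_neg (hR b)]
    simp
  have h3 : (∑ p : Vn n × Fin 2,
        if (RTn n).Adj (inr (inr p)) (inr (inl (inr d))) then f (inr (inr p)) else 0)
      = f (inr (inr (inr d, 0))) + f (inr (inr (inr d, 1))) := by
    rw [Fintype.sum_prod_type]
    have hiff : ∀ (w' : Vn n) (j' : Fin 2),
        ((RTn n).Adj (inr (inr (w', j'))) (inr (inl (inr d))) ↔ w' = inr d) := by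
      intro w' j'
      rw [RTn, adj_po, eq_comm]
    have hstep : ∀ w' : Vn n,
        (∑ j' : Fin 2,
          if (RTn n).Adj (inr (inr (w', j'))) (inr (inl (inr d))) then f (inr (inr (w', j'))) else 0)
        = if w' = inr d then f (inr (inr (w', 0))) + f (inr (inr (w', 1))) else 0 := by
      intro w'
      rw [Finset.sum_congr rfl fun j' _ => by rw [if_congr (hiff w' j') rfl rfl]]
      by_cases hw : w' = inr d
      · simp [hw, Fin.sum_univ_two]
      · simp [hw]
    rw [Finset.sum_congr rfl fun w' _ => hstep w']
    exact sum_collapse (inr d) (fun w' => f (inr (inr (w', 0))) + f (inr (inr (w', 1))))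
  rw [h1, h2, h3]
  ring

end RTP

namespace RTP
variable {n : ℕ}

lemma hNpos (hn : 1 ≤ n) : ((n:ℝ)^2 + 6*(n:ℝ)) ≠ 0 := by
  have h : (1:ℝ) ≤ (n:ℝ) := by exact_mod_cast hn
  nlinarith

section eqs
variable (hn : 1 ≤ n)
include hn

lemma eE1 : 2*p0 n - 2*q1 n = 1 - ((n:ℝ)^2 + 6*(n:ℝ))⁻¹ := by
  have hN := hNpos hn
  unfold p0 q1 Dd
  field_simp
  ring
lemma eE2 : 2*p1 n - q1 n - q2 n = -((n:ℝ)^2 + 6*(n:ℝ))⁻¹ := by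
  have hN := hNpos hn
  unfold p1 q1 q2 Dd
  field_simp
  ring
lemma eE3 : 2*p2 n - 2*q2 n = -((n:ℝ)^2 + 6*(n:ℝ))⁻¹ := by
  have hN := hNpos hn
  unfold p2 q2 Dd
  field_simp
  ring
lemma eE4 : 2*q1 n - t0 n - t1 n = -((n:ℝ)^2 + 6*(n:ℝ))⁻¹ := by
  have hN := hNpos hn
  unfold q1 t0 t1 Dd
  field_simp
  ring
lemma eE5 : 2*q2 n - t2 n - t1 n = -((n:ℝ)^2 + 6*(n:ℝ))⁻¹ := by
  have hN := hNpos hn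
  unfold q2 t2 t1 Dd
  field_simp
  ring
lemma eE6 : 2*s1 n - u0 n - u2 n = -((n:ℝ)^2 + 6*(n:ℝ))⁻¹ := by
  have hN := hNpos hn
  unfold s1 u0 u2 Dd
  field_simp
  ring
lemma eE7 : 2*s2 n - u1 n - u2 n = -((n:ℝ)^2 + 6*(n:ℝ))⁻¹ := by
  have hN := hNpos hn
  unfold s2 u1 u2 Dd
  field_simp
  ring
lemma eE8 : s1 n - q1 n = -((n:ℝ)^2 + 6*(n:ℝ))⁻¹ := by
  have hN := hNpos hn
  unfold s1 q1 Dd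
  field_simp
  ring
lemma eE9 : s2 n - q2 n = -((n:ℝ)^2 + 6*(n:ℝ))⁻¹ := by
  have hN := hNpos hn
  unfold s2 q2 Dd
  field_simp
  ring
lemma eE10 : u0 n - t0 n = -((n:ℝ)^2 + 6*(n:ℝ))⁻¹ := by
  have hN := hNpos hn
  unfold u0 t0 Dd
  field_simp
  ring
lemma eE11 : u1 n - t2 n = -((n:ℝ)^2 + 6*(n:ℝ))⁻¹ := by
  have hN := hNpos hn
  unfold u1 t2 Dd
  field_simp
  ring
lemma eE12 : u2 n - t1 n = -((n:ℝ)^2 + 6*(n:ℝ))⁻¹ := by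
  have hN := hNpos hn
  unfold u2 t1 Dd
  field_simp
  ring
lemma eE13 : 2*z0 n - u0 n - z1 n = 1 - ((n:ℝ)^2 + 6*(n:ℝ))⁻¹ := by
  have hN := hNpos hn
  unfold z0 u0 z1 Dd
  field_simp
  ring
lemma eE14 : 2*z1 n - u0 n - z0 n = -((n:ℝ)^2 + 6*(n:ℝ))⁻¹ := by
  have hN := hNpos hn
  unfold z1 u0 z0 Dd
  field_simp
  ring
lemma eE15 : z2 n - u1 n = -((n:ℝ)^2 + 6*(n:ℝ))⁻¹ := by
  have hN := hNpos hn
  unfold z2 u1 Dd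
  field_simp
  ring
lemma eE16 : z3 n - u2 n = -((n:ℝ)^2 + 6*(n:ℝ))⁻¹ := by
  have hN := hNpos hn
  unfold z3 u2 Dd
  field_simp
  ring
lemma eE17 : (2*(n:ℝ)+2)*q1 n - (q1 n + ((n:ℝ)-1)*q2 n) - (p0 n + ((n:ℝ)-1)*p1 n)
    - 2*s1 n = -((n:ℝ)^2 + 6*(n:ℝ))⁻¹ := by
  have hN := hNpos hn
  unfold q1 q2 p0 p1 s1 Dd
  field_simp
  ring
lemma eE18 : (2*(n:ℝ)+2)*q2 n - (q1 n + ((n:ℝ)-1)*q2 n) - (p1 n + ((n:ℝ)-1)*p2 n)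
    - 2*s2 n = -((n:ℝ)^2 + 6*(n:ℝ))⁻¹ := by
  have hN := hNpos hn
  unfold q1 q2 p1 p2 s2 Dd
  field_simp
  ring
lemma eE19 : (2*(n:ℝ)+2)*t0 n - (n:ℝ)*t1 n - (n:ℝ)*q1 n - 2*u0 n
    = 1 - ((n:ℝ)^2 + 6*(n:ℝ))⁻¹ := by
  have hN := hNpos hn
  unfold t0 t1 q1 u0 Dd
  field_simp
  ring
lemma eE20 : (2*(n:ℝ)+2)*t2 n - (n:ℝ)*t1 n - (n:ℝ)*q2 n - 2*u1 n
    = -((n:ℝ)^2 + 6*(n:ℝ))⁻¹ := by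
  have hN := hNpos hn
  unfold t2 t1 q2 u1 Dd
  field_simp
  ring
lemma eE21 : (2*(n:ℝ)+2)*t1 n - (t0 n + ((n:ℝ)-1)*t2 n) - (q1 n + ((n:ℝ)-1)*q2 n)
    - 2*u2 n = -((n:ℝ)^2 + 6*(n:ℝ))⁻¹ := by
  have hN := hNpos hn
  unfold t1 t0 t2 q1 q2 u2 Dd
  field_simp
  ring
lemma eE22 : (2*(n:ℝ)+2)*u0 n - (n:ℝ)*u2 n - (n:ℝ)*s1 n - (z0 n + z1 n)
    = -((n:ℝ)^2 + 6*(n:ℝ))⁻¹ := by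
  have hN := hNpos hn
  unfold u0 u2 s1 z0 z1 Dd
  field_simp
  ring
lemma eE23 : (2*(n:ℝ)+2)*u1 n - (n:ℝ)*u2 n - (n:ℝ)*s2 n - 2*z2 n
    = -((n:ℝ)^2 + 6*(n:ℝ))⁻¹ := by
  have hN := hNpos hn
  unfold u1 u2 s2 z2 Dd
  field_simp
  ring
lemma eE24 : (2*(n:ℝ)+2)*u2 n - (u0 n + ((n:ℝ)-1)*u1 n) - (s1 n + ((n:ℝ)-1)*s2 n)
    - 2*z3 n = -((n:ℝ)^2 + 6*(n:ℝ))⁻¹ := by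
  have hN := hNpos hn
  unfold u2 u0 u1 s1 s2 z3 Dd
  field_simp
  ring
lemma eR1 : p0 n + 2*((n:ℝ)-1)*p1 n + ((n:ℝ)-1)^2*p2 n + 2*q1 n + (2*(n:ℝ)-2)*q2 n
    + 4*s1 n + (4*(n:ℝ)-4)*s2 n = 0 := by
  have hN := hNpos hn
  unfold p0 p1 p2 q1 q2 s1 s2 Dd
  field_simp
  ring
lemma eR2 : (n:ℝ)*q1 n + (n:ℝ)*((n:ℝ)-1)*q2 n + t0 n + ((n:ℝ)-1)*t2 n + (n:ℝ)*t1 n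
    + 2*u0 n + 2*((n:ℝ)-1)*u1 n + 2*(n:ℝ)*u2 n = 0 := by
  have hN := hNpos hn
  unfold q1 q2 t0 t2 t1 u0 u1 u2 Dd
  field_simp
  ring
lemma eR3 : (n:ℝ)*s1 n + (n:ℝ)*((n:ℝ)-1)*s2 n + u0 n + ((n:ℝ)-1)*u1 n + (n:ℝ)*u2 n
    + z0 n + z1 n + 2*((n:ℝ)-1)*z2 n + 2*(n:ℝ)*z3 n = 0 := by
  have hN := hNpos hn
  unfold s1 s2 u0 u1 u2 z0 z1 z2 z3 Dd
  field_simp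
  ring
lemma eT : ((n:ℝ)^2 + 6*(n:ℝ)) * ((n:ℝ)^2*p0 n + 2*(n:ℝ)*t0 n + 4*(n:ℝ)*z0 n)
    = ((n:ℝ) + 6) ^ 2 * (4 * (n : ℝ) - 3) / 6
        + ((n:ℝ) + 5) * (n : ℝ)
        + ((n:ℝ) + 6) * (10 * (n : ℝ) - 4) * (n : ℝ) / 3
        + ((n:ℝ) - 2) * ((n:ℝ) + 6) * (n : ℝ) ^ 2 / 2 := by
  have hN := hNpos hn
  unfold p0 t0 z0 Dd
  field_simp
  ring
end eqs
end RTP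

namespace RTP
open Sum
variable {n : ℕ}

lemma deg_cast [DecidableRel (RTn n).Adj] (v : Xn n) :
    ((RTn n).degree v : ℝ) = ∑ x : Xn n, if (RTn n).Adj x v then 1 else 0 := by
  rw [SimpleGraph.degree_eq_sum_if_adj]
  exact Finset.sum_congr rfl fun x _ =>
    if_congr ((RTn n).adj_comm v x) rfl rfl

lemma deg_edge [DecidableRel (RTn n).Adj] (c d : Fin n) :
    ((RTn n).degree (inl (ed c d)) : ℝ) = 2 := by
  rw [deg_cast, sum_adj_edge (fun _ => (1:ℝ))]
  norm_num

lemma deg_origL [DecidableRel (RTn n).Adj] (c : Fin n) :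
    ((RTn n).degree (inr (inl (inl c))) : ℝ) = 2*(n:ℝ) + 2 := by
  rw [deg_cast, sum_adj_origL (fun _ => (1:ℝ)), sum_const_real]
  ring

lemma deg_origR [DecidableRel (RTn n).Adj] (d : Fin n) :
    ((RTn n).degree (inr (inl (inr d))) : ℝ) = 2*(n:ℝ) + 2 := by
  rw [deg_cast, sum_adj_origR (fun _ => (1:ℝ)), sum_const_real]
  ring

lemma deg_pend [DecidableRel (RTn n).Adj] (w : Vn n) (j : Fin 2) :
    ((RTn n).degree (inr (inr (w, j))) : ℝ) = 2 := by
  rw [deg_cast, sum_adj_pend (fun _ => (1:ℝ))]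
  norm_num

section entry
variable [DecidableEq (Xn n)] (hn : 1 ≤ n)
include hn

lemma entry_vedge (u : Xn n) (c d : Fin n) :
    Hm n u (inl (ed c d)) * 2
      - (Hm n u (inr (inl (inl c))) + Hm n u (inr (inl (inr d))))
      = (if u = inl (ed c d) then 1 else 0) - ((n:ℝ)^2 + 6*(n:ℝ))⁻¹ := by
  classical
  rcases u with e | uu | ⟨w, j⟩
  · obtain ⟨a, b, rfl⟩ := ed_surj e
    rcases eq_or_ne a c with rfl | hac <;> rcases eq_or_ne b d with rfl | hbd
    · rw [Hee_same, Heo_Leq, Heo_Req, if_pos rfl]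
      linear_combination eE1 hn
    · rw [Hee_shL hbd, Heo_Leq, Heo_Rne (Ne.symm hbd), if_neg (by simp [ed_inj, hbd])]
      linear_combination eE2 hn
    · rw [Hee_shR hac, Heo_Lne (Ne.symm hac), Heo_Req, if_neg (by simp [ed_inj, hac])]
      linear_combination eE2 hn
    · rw [Hee_disj hac hbd, Heo_Lne (Ne.symm hac), Heo_Rne (Ne.symm hbd),
        if_neg (by simp [ed_inj, hac])]
      linear_combination eE3 hn
  · rcases uu with a | b
    · rcases eq_or_ne a c with rfl | hac
      · rw [Hoe_Leq, Hoo_eq, Hoo_LR, if_neg (by simp)]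
        linear_combination eE4 hn
      · rw [Hoe_Lne hac, Hoo_LL hac, Hoo_LR, if_neg (by simp)]
        linear_combination eE5 hn
    · rcases eq_or_ne b d with rfl | hbd
      · rw [Hoe_Req, Hoo_RL, Hoo_eq, if_neg (by simp)]
        linear_combination eE4 hn
      · rw [Hoe_Rne hbd, Hoo_RL, Hoo_RR hbd, if_neg (by simp)]
        linear_combination eE5 hn
  · rcases w with a | b
    · rcases eq_or_ne a c with rfl | hac
      · rw [Hpe_Leq, Hpo_eq, Hpo_RL, if_neg (by simp)]
        linear_combination eE6 hn
      · rw [Hpe_Lne hac, Hpo_LL (Ne.symm hac), Hpo_RL, if_neg (by simp)]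
        linear_combination eE7 hn
    · rcases eq_or_ne b d with rfl | hbd
      · rw [Hpe_Req, Hpo_LR, Hpo_eq, if_neg (by simp)]
        linear_combination eE6 hn
      · rw [Hpe_Rne hbd, Hpo_LR, Hpo_RR (Ne.symm hbd), if_neg (by simp)]
        linear_combination eE7 hn

end entry
end RTP

namespace RTP
open Sum
variable {n : ℕ}
section entry2
variable [DecidableEq (Xn n)] (hn : 1 ≤ n)
include hn

lemma entry_vpend (u : Xn n) (w0 : Vn n) (j0 : Fin 2) :
    Hm n u (inr (inr (w0, j0))) * 2
      - (Hm n u (inr (inl w0)) + Hm n u (inr (inr (w0, oth j0))))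
      = (if u = inr (inr (w0, j0)) then 1 else 0) - ((n:ℝ)^2 + 6*(n:ℝ))⁻¹ := by
  classical
  rcases u with e | uu | ⟨w, j⟩
  · obtain ⟨a, b, rfl⟩ := ed_surj e
    rcases w0 with c | d
    · rcases eq_or_ne c a with rfl | h
      · rw [Hep_Leq, Heo_Leq, Hep_Leq, if_neg (by simp)]
        linear_combination eE8 hn
      · rw [Hep_Lne h, Heo_Lne h, Hep_Lne h, if_neg (by simp)]
        linear_combination eE9 hn
    · rcases eq_or_ne d b with rfl | h
      · rw [Hep_Req, Heo_Req, Hep_Req, if_neg (by simp)]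
        linear_combination eE8 hn
      · rw [Hep_Rne h, Heo_Rne h, Hep_Rne h, if_neg (by simp)]
        linear_combination eE9 hn
  · rcases uu with a | b <;> rcases w0 with c | d
    · rcases eq_or_ne a c with rfl | h
      · rw [Hop_eq, Hoo_eq, Hop_eq, if_neg (by simp)]
        linear_combination eE10 hn
      · rw [Hop_LL h, Hoo_LL h, Hop_LL h, if_neg (by simp)]
        linear_combination eE11 hn
    · rw [Hop_LR, Hoo_LR, Hop_LR, if_neg (by simp)]
      linear_combination eE12 hn
    · rw [Hop_RL, Hoo_RL, Hop_RL, if_neg (by simp)]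
      linear_combination eE12 hn
    · rcases eq_or_ne b d with rfl | h
      · rw [Hop_eq, Hoo_eq, Hop_eq, if_neg (by simp)]
        linear_combination eE10 hn
      · rw [Hop_RR h, Hoo_RR h, Hop_RR h, if_neg (by simp)]
        linear_combination eE11 hn
  · rcases w with a | b <;> rcases w0 with c | d
    · rcases eq_or_ne a c with rfl | h
      · rcases eq_or_ne j j0 with rfl | hj
        · rw [Hpp_eq, Hpo_eq, Hpp_tw (Ne.symm (oth_ne j)), if_pos rfl]
          linear_combination eE13 hn
        · have hoth : oth j0 = j := by
            fin_cases j <;> fin_cases j0 <;> simp_all [oth] <;> rfl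
          rw [Hpp_tw hj, Hpo_eq, hoth, Hpp_eq, if_neg (by simp [hj])]
          linear_combination eE14 hn
      · rw [Hpp_LL h, Hpo_LL (Ne.symm h), Hpp_LL h, if_neg (by simp [h])]
        linear_combination eE15 hn
    · rw [Hpp_LR, Hpo_RL, Hpp_LR, if_neg (by simp)]
      linear_combination eE16 hn
    · rw [Hpp_RL, Hpo_LR, Hpp_RL, if_neg (by simp)]
      linear_combination eE16 hn
    · rcases eq_or_ne b d with rfl | h
      · rcases eq_or_ne j j0 with rfl | hj
        · rw [Hpp_eq, Hpo_eq, Hpp_tw (Ne.symm (oth_ne j)), if_pos rfl]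
          linear_combination eE13 hn
        · have hoth : oth j0 = j := by
            fin_cases j <;> fin_cases j0 <;> simp_all [oth] <;> rfl
          rw [Hpp_tw hj, Hpo_eq, hoth, Hpp_eq, if_neg (by simp [hj])]
          linear_combination eE14 hn
      · rw [Hpp_RR h, Hpo_RR (Ne.symm h), Hpp_RR h, if_neg (by simp [h])]
        linear_combination eE15 hn

end entry2
end RTP

namespace RTP
open Sum
variable {n : ℕ}
section entry3
variable [DecidableEq (Xn n)] (hn : 1 ≤ n)
include hn

lemma entry_vorigL (u : Xn n) (c : Fin n) :
    Hm n u (inr (inl (inl c))) * (2*(n:ℝ) + 2)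
      - ((∑ b : Fin n, Hm n u (inl (ed c b))) + (∑ b : Fin n, Hm n u (inr (inl (inr b))))
        + (Hm n u (inr (inr (inl c, 0))) + Hm n u (inr (inr (inl c, 1)))))
      = (if u = inr (inl (inl c)) then 1 else 0) - ((n:ℝ)^2 + 6*(n:ℝ))⁻¹ := by
  classical
  rcases u with e | uu | ⟨w, j⟩
  · obtain ⟨a, b0, rfl⟩ := ed_surj e
    have hS2 : (∑ b : Fin n, Hm n (inl (ed a b0)) (inr (inl (inr b))))
        = q1 n + ((n:ℝ)-1) * q2 n := by
      rw [Finset.sum_congr rfl (fun b _ =>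
        show Hm n (inl (ed a b0)) (inr (inl (inr b))) = if b = b0 then q1 n else q2 n from by
          rcases eq_or_ne b b0 with rfl | h
          · rw [Heo_Req, if_pos rfl]
          · rw [Heo_Rne h, if_neg h]), sum_ite_count b0]
    rcases eq_or_ne a c with rfl | hac
    · have hS1 : (∑ b : Fin n, Hm n (inl (ed a b0)) (inl (ed a b)))
          = p0 n + ((n:ℝ)-1) * p1 n := by
        rw [Finset.sum_congr rfl (fun b _ =>
          show Hm n (inl (ed a b0)) (inl (ed a b)) = if b = b0 then p0 n else p1 n from by
            rcases eq_or_ne b b0 with rfl | h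
            · rw [Hee_same, if_pos rfl]
            · rw [Hee_shL (Ne.symm h), if_neg h]), sum_ite_count b0]
      rw [hS1, hS2, Hep_Leq, Hep_Leq, Heo_Leq, if_neg (by simp)]
      linear_combination eE17 hn
    · have hS1 : (∑ b : Fin n, Hm n (inl (ed a b0)) (inl (ed c b)))
          = p1 n + ((n:ℝ)-1) * p2 n := by
        rw [Finset.sum_congr rfl (fun b _ =>
          show Hm n (inl (ed a b0)) (inl (ed c b)) = if b = b0 then p1 n else p2 n from by
            rcases eq_or_ne b b0 with rfl | h
            · rw [Hee_shR hac, if_pos rfl]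
            · rw [Hee_disj hac (Ne.symm h), if_neg h]), sum_ite_count b0]
      rw [hS1, hS2, Hep_Lne (Ne.symm hac), Hep_Lne (Ne.symm hac), Heo_Lne (Ne.symm hac),
        if_neg (by simp)]
      linear_combination eE18 hn
  · rcases uu with a | b1
    · have hS2 : (∑ b : Fin n, Hm n (inr (inl (inl a))) (inr (inl (inr b))))
          = (n:ℝ) * t1 n := by
        rw [Finset.sum_congr rfl (fun b _ => Hoo_LR), sum_const_real]
      rcases eq_or_ne a c with rfl | hac
      · have hS1 : (∑ b : Fin n, Hm n (inr (inl (inl a))) (inl (ed a b)))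
            = (n:ℝ) * q1 n := by
          rw [Finset.sum_congr rfl (fun b _ => Hoe_Leq), sum_const_real]
        rw [hS1, hS2, Hop_eq, Hop_eq, Hoo_eq, if_pos rfl]
        linear_combination eE19 hn
      · have hS1 : (∑ b : Fin n, Hm n (inr (inl (inl a))) (inl (ed c b)))
            = (n:ℝ) * q2 n := by
          rw [Finset.sum_congr rfl (fun b _ => Hoe_Lne hac), sum_const_real]
        rw [hS1, hS2, Hop_LL hac, Hop_LL hac, Hoo_LL hac, if_neg (by simp [hac])]
        linear_combination eE20 hn
    · have hS1 : (∑ b : Fin n, Hm n (inr (inl (inr b1))) (inl (ed c b)))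
          = q1 n + ((n:ℝ)-1) * q2 n := by
        rw [Finset.sum_congr rfl (fun b _ =>
          show Hm n (inr (inl (inr b1))) (inl (ed c b)) = if b = b1 then q1 n else q2 n from by
            rcases eq_or_ne b b1 with rfl | h
            · rw [Hoe_Req, if_pos rfl]
            · rw [Hoe_Rne (Ne.symm h), if_neg h]), sum_ite_count b1]
      have hS2 : (∑ b : Fin n, Hm n (inr (inl (inr b1))) (inr (inl (inr b))))
          = t0 n + ((n:ℝ)-1) * t2 n := by
        rw [Finset.sum_congr rfl (fun b _ =>
          show Hm n (inr (inl (inr b1))) (inr (inl (inr b))) = if b = b1 then t0 n else t2 n from by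
            rcases eq_or_ne b b1 with rfl | h
            · rw [Hoo_eq, if_pos rfl]
            · rw [Hoo_RR (Ne.symm h), if_neg h]), sum_ite_count b1]
      rw [hS1, hS2, Hop_RL, Hop_RL, Hoo_RL, if_neg (by simp)]
      linear_combination eE21 hn
  · rcases w with a | b1
    · have hS2 : (∑ b : Fin n, Hm n (inr (inr (inl a, j))) (inr (inl (inr b))))
          = (n:ℝ) * u2 n := by
        rw [Finset.sum_congr rfl (fun b _ => Hpo_RL), sum_const_real]
      rcases eq_or_ne a c with rfl | hac
      · have hS1 : (∑ b : Fin n, Hm n (inr (inr (inl a, j))) (inl (ed a b)))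
            = (n:ℝ) * s1 n := by
          rw [Finset.sum_congr rfl (fun b _ => Hpe_Leq), sum_const_real]
        have hZ : Hm n (inr (inr (inl a, j))) (inr (inr (inl a, 0)))
            + Hm n (inr (inr (inl a, j))) (inr (inr (inl a, 1))) = z0 n + z1 n := by
          have hj : j = 0 ∨ j = 1 := by omega
          rcases hj with rfl | rfl
          · rw [Hpp_eq, Hpp_tw (by decide)]
          · rw [Hpp_tw (by decide), Hpp_eq]; ring
        rw [hS1, hS2, hZ, Hpo_eq, if_neg (by simp)]
        linear_combination eE22 hn
      · have hS1 : (∑ b : Fin n, Hm n (inr (inr (inl a, j))) (inl (ed c b)))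
            = (n:ℝ) * s2 n := by
          rw [Finset.sum_congr rfl (fun b _ => Hpe_Lne hac), sum_const_real]
        rw [hS1, hS2, Hpp_LL hac, Hpp_LL hac, Hpo_LL (Ne.symm hac), if_neg (by simp)]
        linear_combination eE23 hn
    · have hS1 : (∑ b : Fin n, Hm n (inr (inr (inr b1, j))) (inl (ed c b)))
          = s1 n + ((n:ℝ)-1) * s2 n := by
        rw [Finset.sum_congr rfl (fun b _ =>
          show Hm n (inr (inr (inr b1, j))) (inl (ed c b)) = if b = b1 then s1 n else s2 n from by
            rcases eq_or_ne b b1 with rfl | h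
            · rw [Hpe_Req, if_pos rfl]
            · rw [Hpe_Rne (Ne.symm h), if_neg h]), sum_ite_count b1]
      have hS2 : (∑ b : Fin n, Hm n (inr (inr (inr b1, j))) (inr (inl (inr b))))
          = u0 n + ((n:ℝ)-1) * u1 n := by
        rw [Finset.sum_congr rfl (fun b _ =>
          show Hm n (inr (inr (inr b1, j))) (inr (inl (inr b))) = if b = b1 then u0 n else u1 n from by
            rcases eq_or_ne b b1 with rfl | h
            · rw [Hpo_eq, if_pos rfl]
            · rw [Hpo_RR h, if_neg h]), sum_ite_count b1]
      rw [hS1, hS2, Hpp_RL, Hpp_RL, Hpo_LR, if_neg (by simp)]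
      linear_combination eE24 hn

lemma entry_vorigR (u : Xn n) (d : Fin n) :
    Hm n u (inr (inl (inr d))) * (2*(n:ℝ) + 2)
      - ((∑ a : Fin n, Hm n u (inl (ed a d))) + (∑ a : Fin n, Hm n u (inr (inl (inl a))))
        + (Hm n u (inr (inr (inr d, 0))) + Hm n u (inr (inr (inr d, 1)))))
      = (if u = inr (inl (inr d)) then 1 else 0) - ((n:ℝ)^2 + 6*(n:ℝ))⁻¹ := by
  classical
  rcases u with e | uu | ⟨w, j⟩
  · obtain ⟨a0, b, rfl⟩ := ed_surj e
    have hS2 : (∑ a : Fin n, Hm n (inl (ed a0 b)) (inr (inl (inl a))))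
        = q1 n + ((n:ℝ)-1) * q2 n := by
      rw [Finset.sum_congr rfl (fun a _ =>
        show Hm n (inl (ed a0 b)) (inr (inl (inl a))) = if a = a0 then q1 n else q2 n from by
          rcases eq_or_ne a a0 with rfl | h
          · rw [Heo_Leq, if_pos rfl]
          · rw [Heo_Lne h, if_neg h]), sum_ite_count a0]
    rcases eq_or_ne b d with rfl | hbd
    · have hS1 : (∑ a : Fin n, Hm n (inl (ed a0 b)) (inl (ed a b)))
          = p0 n + ((n:ℝ)-1) * p1 n := by
        rw [Finset.sum_congr rfl (fun a _ =>
          show Hm n (inl (ed a0 b)) (inl (ed a b)) = if a = a0 then p0 n else p1 n from by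
            rcases eq_or_ne a a0 with rfl | h
            · rw [Hee_same, if_pos rfl]
            · rw [Hee_shR (Ne.symm h), if_neg h]), sum_ite_count a0]
      rw [hS1, hS2, Hep_Req, Hep_Req, Heo_Req, if_neg (by simp)]
      linear_combination eE17 hn
    · have hS1 : (∑ a : Fin n, Hm n (inl (ed a0 b)) (inl (ed a d)))
          = p1 n + ((n:ℝ)-1) * p2 n := by
        rw [Finset.sum_congr rfl (fun a _ =>
          show Hm n (inl (ed a0 b)) (inl (ed a d)) = if a = a0 then p1 n else p2 n from by
            rcases eq_or_ne a a0 with rfl | h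
            · rw [Hee_shL hbd, if_pos rfl]
            · rw [Hee_disj (Ne.symm h) hbd, if_neg h]), sum_ite_count a0]
      rw [hS1, hS2, Hep_Rne (Ne.symm hbd), Hep_Rne (Ne.symm hbd), Heo_Rne (Ne.symm hbd),
        if_neg (by simp)]
      linear_combination eE18 hn
  · rcases uu with a1 | b1
    · have hS1 : (∑ a : Fin n, Hm n (inr (inl (inl a1))) (inl (ed a d)))
          = q1 n + ((n:ℝ)-1) * q2 n := by
        rw [Finset.sum_congr rfl (fun a _ =>
          show Hm n (inr (inl (inl a1))) (inl (ed a d)) = if a = a1 then q1 n else q2 n from by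
            rcases eq_or_ne a a1 with rfl | h
            · rw [Hoe_Leq, if_pos rfl]
            · rw [Hoe_Lne (Ne.symm h), if_neg h]), sum_ite_count a1]
      have hS2 : (∑ a : Fin n, Hm n (inr (inl (inl a1))) (inr (inl (inl a))))
          = t0 n + ((n:ℝ)-1) * t2 n := by
        rw [Finset.sum_congr rfl (fun a _ =>
          show Hm n (inr (inl (inl a1))) (inr (inl (inl a))) = if a = a1 then t0 n else t2 n from by
            rcases eq_or_ne a a1 with rfl | h
            · rw [Hoo_eq, if_pos rfl]
            · rw [Hoo_LL (Ne.symm h), if_neg h]), sum_ite_count a1]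
      rw [hS1, hS2, Hop_LR, Hop_LR, Hoo_LR, if_neg (by simp)]
      linear_combination eE21 hn
    · have hS2 : (∑ a : Fin n, Hm n (inr (inl (inr b1))) (inr (inl (inl a))))
          = (n:ℝ) * t1 n := by
        rw [Finset.sum_congr rfl (fun a _ => Hoo_RL), sum_const_real]
      rcases eq_or_ne b1 d with rfl | hbd
      · have hS1 : (∑ a : Fin n, Hm n (inr (inl (inr b1))) (inl (ed a b1)))
            = (n:ℝ) * q1 n := by
          rw [Finset.sum_congr rfl (fun a _ => Hoe_Req), sum_const_real]
        rw [hS1, hS2, Hop_eq, Hop_eq, Hoo_eq, if_pos rfl]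
        linear_combination eE19 hn
      · have hS1 : (∑ a : Fin n, Hm n (inr (inl (inr b1))) (inl (ed a d)))
            = (n:ℝ) * q2 n := by
          rw [Finset.sum_congr rfl (fun a _ => Hoe_Rne hbd), sum_const_real]
        rw [hS1, hS2, Hop_RR hbd, Hop_RR hbd, Hoo_RR hbd, if_neg (by simp [hbd])]
        linear_combination eE20 hn
  · rcases w with a1 | b1
    · have hS1 : (∑ a : Fin n, Hm n (inr (inr (inl a1, j))) (inl (ed a d)))
          = s1 n + ((n:ℝ)-1) * s2 n := by
        rw [Finset.sum_congr rfl (fun a _ =>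
          show Hm n (inr (inr (inl a1, j))) (inl (ed a d)) = if a = a1 then s1 n else s2 n from by
            rcases eq_or_ne a a1 with rfl | h
            · rw [Hpe_Leq, if_pos rfl]
            · rw [Hpe_Lne (Ne.symm h), if_neg h]), sum_ite_count a1]
      have hS2 : (∑ a : Fin n, Hm n (inr (inr (inl a1, j))) (inr (inl (inl a))))
          = u0 n + ((n:ℝ)-1) * u1 n := by
        rw [Finset.sum_congr rfl (fun a _ =>
          show Hm n (inr (inr (inl a1, j))) (inr (inl (inl a))) = if a = a1 then u0 n else u1 n from by
            rcases eq_or_ne a a1 with rfl | h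
            · rw [Hpo_eq, if_pos rfl]
            · rw [Hpo_LL h, if_neg h]), sum_ite_count a1]
      rw [hS1, hS2, Hpp_LR, Hpp_LR, Hpo_RL, if_neg (by simp)]
      linear_combination eE24 hn
    · have hS2 : (∑ a : Fin n, Hm n (inr (inr (inr b1, j))) (inr (inl (inl a))))
          = (n:ℝ) * u2 n := by
        rw [Finset.sum_congr rfl (fun a _ => Hpo_LR), sum_const_real]
      rcases eq_or_ne b1 d with rfl | hbd
      · have hS1 : (∑ a : Fin n, Hm n (inr (inr (inr b1, j))) (inl (ed a b1)))
            = (n:ℝ) * s1 n := by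
          rw [Finset.sum_congr rfl (fun a _ => Hpe_Req), sum_const_real]
        have hZ : Hm n (inr (inr (inr b1, j))) (inr (inr (inr b1, 0)))
            + Hm n (inr (inr (inr b1, j))) (inr (inr (inr b1, 1))) = z0 n + z1 n := by
          have hj : j = 0 ∨ j = 1 := by omega
          rcases hj with rfl | rfl
          · rw [Hpp_eq, Hpp_tw (by decide)]
          · rw [Hpp_tw (by decide), Hpp_eq]; ring
        rw [hS1, hS2, hZ, Hpo_eq, if_neg (by simp)]
        linear_combination eE22 hn
      · have hS1 : (∑ a : Fin n, Hm n (inr (inr (inr b1, j))) (inl (ed a d)))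
            = (n:ℝ) * s2 n := by
          rw [Finset.sum_congr rfl (fun a _ => Hpe_Rne hbd), sum_const_real]
        rw [hS1, hS2, Hpp_RR hbd, Hpp_RR hbd, Hpo_RR (Ne.symm hbd), if_neg (by simp)]
        linear_combination eE23 hn

end entry3
end RTP

namespace RTP
open Sum
variable {n : ℕ}

lemma sum_edges (g : (Gn n).edgeSet → ℝ) :
    (∑ e : (Gn n).edgeSet, g e) = ∑ a : Fin n, ∑ b : Fin n, g (ed a b) :=
  ((Fintype.sum_bijective _ ed_bij _ _ (fun p => rfl)).symm).trans (Fintype.sum_prod_type _)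

lemma row_split (u : Xn n) :
    (∑ x : Xn n, Hm n u x)
      = (∑ a : Fin n, ∑ b : Fin n, Hm n u (inl (ed a b)))
        + ((∑ c : Fin n, Hm n u (inr (inl (inl c))))
          + (∑ d : Fin n, Hm n u (inr (inl (inr d)))))
        + ((∑ c : Fin n, ∑ j : Fin 2, Hm n u (inr (inr (inl c, j))))
          + (∑ d : Fin n, ∑ j : Fin 2, Hm n u (inr (inr (inr d, j))))) := by
  rw [Fintype.sum_sum_type, Fintype.sum_sum_type, Fintype.sum_prod_type,
    Fintype.sum_sum_type, sum_edges (fun e => Hm n u (inl e)), Fintype.sum_sum_type]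
  ring

section rows
variable (hn : 1 ≤ n)
include hn

lemma Hrow : Hm n *ᵥ (fun _ => (1:ℝ)) = 0 := by
  classical
  funext u
  show (∑ x : Xn n, Hm n u x * 1) = 0
  simp only [mul_one]
  rw [row_split u]
  rcases u with e | uu | ⟨w, j⟩
  · obtain ⟨a, b0, rfl⟩ := ed_surj e
    have h1 : (∑ a' : Fin n, ∑ b' : Fin n, Hm n (inl (ed a b0)) (inl (ed a' b')))
        = (p0 n + ((n:ℝ)-1) * p1 n) + ((n:ℝ)-1) * (p1 n + ((n:ℝ)-1) * p2 n) := by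
      rw [Finset.sum_congr rfl (fun a' _ =>
        show (∑ b' : Fin n, Hm n (inl (ed a b0)) (inl (ed a' b')))
          = if a' = a then p0 n + ((n:ℝ)-1) * p1 n else p1 n + ((n:ℝ)-1) * p2 n from by
        rcases eq_or_ne a' a with rfl | ha
        · rw [if_pos rfl, Finset.sum_congr rfl (fun b' _ =>
            show Hm n (inl (ed a' b0)) (inl (ed a' b')) = if b' = b0 then p0 n else p1 n from by
              rcases eq_or_ne b' b0 with rfl | h
              · rw [Hee_same, if_pos rfl]
              · rw [Hee_shL (Ne.symm h), if_neg h]), sum_ite_count b0]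
        · rw [if_neg ha, Finset.sum_congr rfl (fun b' _ =>
            show Hm n (inl (ed a b0)) (inl (ed a' b')) = if b' = b0 then p1 n else p2 n from by
              rcases eq_or_ne b' b0 with rfl | h
              · rw [Hee_shR (Ne.symm ha), if_pos rfl]
              · rw [Hee_disj (Ne.symm ha) (Ne.symm h), if_neg h]), sum_ite_count b0]),
        sum_ite_count a]
    have h2 : (∑ c : Fin n, Hm n (inl (ed a b0)) (inr (inl (inl c))))
        = q1 n + ((n:ℝ)-1) * q2 n := by
      rw [Finset.sum_congr rfl (fun c _ =>
        show Hm n (inl (ed a b0)) (inr (inl (inl c))) = if c = a then q1 n else q2 n from by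
          rcases eq_or_ne c a with rfl | h
          · rw [Heo_Leq, if_pos rfl]
          · rw [Heo_Lne h, if_neg h]), sum_ite_count a]
    have h3 : (∑ d : Fin n, Hm n (inl (ed a b0)) (inr (inl (inr d))))
        = q1 n + ((n:ℝ)-1) * q2 n := by
      rw [Finset.sum_congr rfl (fun d _ =>
        show Hm n (inl (ed a b0)) (inr (inl (inr d))) = if d = b0 then q1 n else q2 n from by
          rcases eq_or_ne d b0 with rfl | h
          · rw [Heo_Req, if_pos rfl]
          · rw [Heo_Rne h, if_neg h]), sum_ite_count b0]
    have h4 : (∑ c : Fin n, ∑ j : Fin 2, Hm n (inl (ed a b0)) (inr (inr (inl c, j))))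
        = 2 * s1 n + ((n:ℝ)-1) * (2 * s2 n) := by
      rw [Finset.sum_congr rfl (fun c _ =>
        show (∑ j : Fin 2, Hm n (inl (ed a b0)) (inr (inr (inl c, j))))
          = if c = a then 2 * s1 n else 2 * s2 n from by
        rcases eq_or_ne c a with rfl | h
        · rw [if_pos rfl, Fin.sum_univ_two, Hep_Leq, Hep_Leq]; ring
        · rw [if_neg h, Fin.sum_univ_two, Hep_Lne h, Hep_Lne h]; ring), sum_ite_count a]
    have h5 : (∑ d : Fin n, ∑ j : Fin 2, Hm n (inl (ed a b0)) (inr (inr (inr d, j))))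
        = 2 * s1 n + ((n:ℝ)-1) * (2 * s2 n) := by
      rw [Finset.sum_congr rfl (fun d _ =>
        show (∑ j : Fin 2, Hm n (inl (ed a b0)) (inr (inr (inr d, j))))
          = if d = b0 then 2 * s1 n else 2 * s2 n from by
        rcases eq_or_ne d b0 with rfl | h
        · rw [if_pos rfl, Fin.sum_univ_two, Hep_Req, Hep_Req]; ring
        · rw [if_neg h, Fin.sum_univ_two, Hep_Rne h, Hep_Rne h]; ring), sum_ite_count b0]
    rw [h1, h2, h3, h4, h5]
    linear_combination eR1 hn
  · rcases uu with a | b1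
    · have h1 : (∑ a' : Fin n, ∑ b' : Fin n, Hm n (inr (inl (inl a))) (inl (ed a' b')))
          = (n:ℝ) * q1 n + ((n:ℝ)-1) * ((n:ℝ) * q2 n) := by
        rw [Finset.sum_congr rfl (fun a' _ =>
          show (∑ b' : Fin n, Hm n (inr (inl (inl a))) (inl (ed a' b')))
            = if a' = a then (n:ℝ) * q1 n else (n:ℝ) * q2 n from by
          rcases eq_or_ne a' a with rfl | ha
          · rw [if_pos rfl, Finset.sum_congr rfl (fun b' _ => Hoe_Leq), sum_const_real]
          · rw [if_neg ha, Finset.sum_congr rfl (fun b' _ => Hoe_Lne (Ne.symm ha)),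
              sum_const_real]), sum_ite_count a]
      have h2 : (∑ c : Fin n, Hm n (inr (inl (inl a))) (inr (inl (inl c))))
          = t0 n + ((n:ℝ)-1) * t2 n := by
        rw [Finset.sum_congr rfl (fun c _ =>
          show Hm n (inr (inl (inl a))) (inr (inl (inl c))) = if c = a then t0 n else t2 n from by
            rcases eq_or_ne c a with rfl | h
            · rw [Hoo_eq, if_pos rfl]
            · rw [Hoo_LL (Ne.symm h), if_neg h]), sum_ite_count a]
      have h3 : (∑ d : Fin n, Hm n (inr (inl (inl a))) (inr (inl (inr d)))) = (n:ℝ) * t1 n := by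
        rw [Finset.sum_congr rfl (fun d _ => Hoo_LR), sum_const_real]
      have h4 : (∑ c : Fin n, ∑ j : Fin 2, Hm n (inr (inl (inl a))) (inr (inr (inl c, j))))
          = 2 * u0 n + ((n:ℝ)-1) * (2 * u1 n) := by
        rw [Finset.sum_congr rfl (fun c _ =>
          show (∑ j : Fin 2, Hm n (inr (inl (inl a))) (inr (inr (inl c, j))))
            = if c = a then 2 * u0 n else 2 * u1 n from by
          rcases eq_or_ne c a with rfl | h
          · rw [if_pos rfl, Fin.sum_univ_two, Hop_eq, Hop_eq]; ring
          · rw [if_neg h, Fin.sum_univ_two, Hop_LL (Ne.symm h), Hop_LL (Ne.symm h)]; ring),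
          sum_ite_count a]
      have h5 : (∑ d : Fin n, ∑ j : Fin 2, Hm n (inr (inl (inl a))) (inr (inr (inr d, j))))
          = (n:ℝ) * (2 * u2 n) := by
        rw [Finset.sum_congr rfl (fun d _ =>
          show (∑ j : Fin 2, Hm n (inr (inl (inl a))) (inr (inr (inr d, j)))) = 2 * u2 n from by
          rw [Fin.sum_univ_two, Hop_LR, Hop_LR]; ring), sum_const_real]
      rw [h1, h2, h3, h4, h5]
      linear_combination eR2 hn
    · have h1 : (∑ a' : Fin n, ∑ b' : Fin n, Hm n (inr (inl (inr b1))) (inl (ed a' b')))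
          = (n:ℝ) * (q1 n + ((n:ℝ)-1) * q2 n) := by
        rw [Finset.sum_congr rfl (fun a' _ =>
          show (∑ b' : Fin n, Hm n (inr (inl (inr b1))) (inl (ed a' b')))
            = q1 n + ((n:ℝ)-1) * q2 n from by
          rw [Finset.sum_congr rfl (fun b' _ =>
            show Hm n (inr (inl (inr b1))) (inl (ed a' b')) = if b' = b1 then q1 n else q2 n from by
              rcases eq_or_ne b' b1 with rfl | h
              · rw [Hoe_Req, if_pos rfl]
              · rw [Hoe_Rne (Ne.symm h), if_neg h]), sum_ite_count b1]), sum_const_real]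
      have h2 : (∑ c : Fin n, Hm n (inr (inl (inr b1))) (inr (inl (inl c)))) = (n:ℝ) * t1 n := by
        rw [Finset.sum_congr rfl (fun c _ => Hoo_RL), sum_const_real]
      have h3 : (∑ d : Fin n, Hm n (inr (inl (inr b1))) (inr (inl (inr d))))
          = t0 n + ((n:ℝ)-1) * t2 n := by
        rw [Finset.sum_congr rfl (fun d _ =>
          show Hm n (inr (inl (inr b1))) (inr (inl (inr d))) = if d = b1 then t0 n else t2 n from by
            rcases eq_or_ne d b1 with rfl | h
            · rw [Hoo_eq, if_pos rfl]
            · rw [Hoo_RR (Ne.symm h), if_neg h]), sum_ite_count b1]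
      have h4 : (∑ c : Fin n, ∑ j : Fin 2, Hm n (inr (inl (inr b1))) (inr (inr (inl c, j))))
          = (n:ℝ) * (2 * u2 n) := by
        rw [Finset.sum_congr rfl (fun c _ =>
          show (∑ j : Fin 2, Hm n (inr (inl (inr b1))) (inr (inr (inl c, j)))) = 2 * u2 n from by
          rw [Fin.sum_univ_two, Hop_RL, Hop_RL]; ring), sum_const_real]
      have h5 : (∑ d : Fin n, ∑ j : Fin 2, Hm n (inr (inl (inr b1))) (inr (inr (inr d, j))))
          = 2 * u0 n + ((n:ℝ)-1) * (2 * u1 n) := by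
        rw [Finset.sum_congr rfl (fun d _ =>
          show (∑ j : Fin 2, Hm n (inr (inl (inr b1))) (inr (inr (inr d, j))))
            = if d = b1 then 2 * u0 n else 2 * u1 n from by
          rcases eq_or_ne d b1 with rfl | h
          · rw [if_pos rfl, Fin.sum_univ_two, Hop_eq, Hop_eq]; ring
          · rw [if_neg h, Fin.sum_univ_two, Hop_RR (Ne.symm h), Hop_RR (Ne.symm h)]; ring),
          sum_ite_count b1]
      rw [h1, h2, h3, h4, h5]
      linear_combination eR2 hn
  · rcases w with a | b1
    · have h1 : (∑ a' : Fin n, ∑ b' : Fin n, Hm n (inr (inr (inl a, j))) (inl (ed a' b')))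
          = (n:ℝ) * s1 n + ((n:ℝ)-1) * ((n:ℝ) * s2 n) := by
        rw [Finset.sum_congr rfl (fun a' _ =>
          show (∑ b' : Fin n, Hm n (inr (inr (inl a, j))) (inl (ed a' b')))
            = if a' = a then (n:ℝ) * s1 n else (n:ℝ) * s2 n from by
          rcases eq_or_ne a' a with rfl | ha
          · rw [if_pos rfl, Finset.sum_congr rfl (fun b' _ => Hpe_Leq), sum_const_real]
          · rw [if_neg ha, Finset.sum_congr rfl (fun b' _ => Hpe_Lne (Ne.symm ha)),
              sum_const_real]), sum_ite_count a]
      have h2 : (∑ c : Fin n, Hm n (inr (inr (inl a, j))) (inr (inl (inl c))))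
          = u0 n + ((n:ℝ)-1) * u1 n := by
        rw [Finset.sum_congr rfl (fun c _ =>
          show Hm n (inr (inr (inl a, j))) (inr (inl (inl c))) = if c = a then u0 n else u1 n from by
            rcases eq_or_ne c a with rfl | h
            · rw [Hpo_eq, if_pos rfl]
            · rw [Hpo_LL h, if_neg h]), sum_ite_count a]
      have h3 : (∑ d : Fin n, Hm n (inr (inr (inl a, j))) (inr (inl (inr d))))
          = (n:ℝ) * u2 n := by
        rw [Finset.sum_congr rfl (fun d _ => Hpo_RL), sum_const_real]
      have h4 : (∑ c : Fin n, ∑ j' : Fin 2, Hm n (inr (inr (inl a, j))) (inr (inr (inl c, j'))))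
          = (z0 n + z1 n) + ((n:ℝ)-1) * (2 * z2 n) := by
        rw [Finset.sum_congr rfl (fun c _ =>
          show (∑ j' : Fin 2, Hm n (inr (inr (inl a, j))) (inr (inr (inl c, j'))))
            = if c = a then z0 n + z1 n else 2 * z2 n from by
          rcases eq_or_ne c a with rfl | h
          · rw [if_pos rfl, Fin.sum_univ_two]
            have hj : j = 0 ∨ j = 1 := by omega
            rcases hj with rfl | rfl
            · rw [Hpp_eq, Hpp_tw (by decide)]
            · rw [Hpp_tw (by decide), Hpp_eq]; ring
          · rw [if_neg h, Fin.sum_univ_two, Hpp_LL (Ne.symm h), Hpp_LL (Ne.symm h)]; ring),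
          sum_ite_count a]
      have h5 : (∑ d : Fin n, ∑ j' : Fin 2, Hm n (inr (inr (inl a, j))) (inr (inr (inr d, j'))))
          = (n:ℝ) * (2 * z3 n) := by
        rw [Finset.sum_congr rfl (fun d _ =>
          show (∑ j' : Fin 2, Hm n (inr (inr (inl a, j))) (inr (inr (inr d, j')))) = 2 * z3 n from by
          rw [Fin.sum_univ_two, Hpp_LR, Hpp_LR]; ring), sum_const_real]
      rw [h1, h2, h3, h4, h5]
      linear_combination eR3 hn
    · have h1 : (∑ a' : Fin n, ∑ b' : Fin n, Hm n (inr (inr (inr b1, j))) (inl (ed a' b')))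
          = (n:ℝ) * (s1 n + ((n:ℝ)-1) * s2 n) := by
        rw [Finset.sum_congr rfl (fun a' _ =>
          show (∑ b' : Fin n, Hm n (inr (inr (inr b1, j))) (inl (ed a' b')))
            = s1 n + ((n:ℝ)-1) * s2 n from by
          rw [Finset.sum_congr rfl (fun b' _ =>
            show Hm n (inr (inr (inr b1, j))) (inl (ed a' b'))
              = if b' = b1 then s1 n else s2 n from by
              rcases eq_or_ne b' b1 with rfl | h
              · rw [Hpe_Req, if_pos rfl]
              · rw [Hpe_Rne (Ne.symm h), if_neg h]), sum_ite_count b1]), sum_const_real]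
      have h2 : (∑ c : Fin n, Hm n (inr (inr (inr b1, j))) (inr (inl (inl c))))
          = (n:ℝ) * u2 n := by
        rw [Finset.sum_congr rfl (fun c _ => Hpo_LR), sum_const_real]
      have h3 : (∑ d : Fin n, Hm n (inr (inr (inr b1, j))) (inr (inl (inr d))))
          = u0 n + ((n:ℝ)-1) * u1 n := by
        rw [Finset.sum_congr rfl (fun d _ =>
          show Hm n (inr (inr (inr b1, j))) (inr (inl (inr d))) = if d = b1 then u0 n else u1 n from by
            rcases eq_or_ne d b1 with rfl | h
            · rw [Hpo_eq, if_pos rfl]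
            · rw [Hpo_RR h, if_neg h]), sum_ite_count b1]
      have h4 : (∑ c : Fin n, ∑ j' : Fin 2, Hm n (inr (inr (inr b1, j))) (inr (inr (inl c, j'))))
          = (n:ℝ) * (2 * z3 n) := by
        rw [Finset.sum_congr rfl (fun c _ =>
          show (∑ j' : Fin 2, Hm n (inr (inr (inr b1, j))) (inr (inr (inl c, j')))) = 2 * z3 n from by
          rw [Fin.sum_univ_two, Hpp_RL, Hpp_RL]; ring), sum_const_real]
      have h5 : (∑ d : Fin n, ∑ j' : Fin 2, Hm n (inr (inr (inr b1, j))) (inr (inr (inr d, j'))))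
          = (z0 n + z1 n) + ((n:ℝ)-1) * (2 * z2 n) := by
        rw [Finset.sum_congr rfl (fun d _ =>
          show (∑ j' : Fin 2, Hm n (inr (inr (inr b1, j))) (inr (inr (inr d, j'))))
            = if d = b1 then z0 n + z1 n else 2 * z2 n from by
          rcases eq_or_ne d b1 with rfl | h
          · rw [if_pos rfl, Fin.sum_univ_two]
            have hj : j = 0 ∨ j = 1 := by omega
            rcases hj with rfl | rfl
            · rw [Hpp_eq, Hpp_tw (by decide)]
            · rw [Hpp_tw (by decide), Hpp_eq]; ring
          · rw [if_neg h, Fin.sum_univ_two, Hpp_RR (Ne.symm h), Hpp_RR (Ne.symm h)]; ring),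
          sum_ite_count b1]
      rw [h1, h2, h3, h4, h5]
      linear_combination eR3 hn

end rows

lemma Htrace : (Hm n).trace = (n:ℝ)^2 * p0 n + 2*(n:ℝ)*t0 n + 4*(n:ℝ)*z0 n := by
  classical
  show (∑ x : Xn n, Hm n x x) = _
  rw [Fintype.sum_sum_type, Fintype.sum_sum_type,
    sum_edges (fun e => Hm n (inl e) (inl e))]
  have h1 : (∑ a : Fin n, ∑ b : Fin n, Hm n (inl (ed a b)) (inl (ed a b)))
      = (n:ℝ) * ((n:ℝ) * p0 n) := by
    rw [Finset.sum_congr rfl (fun a _ =>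
      show (∑ b : Fin n, Hm n (inl (ed a b)) (inl (ed a b))) = (n:ℝ) * p0 n from by
        rw [Finset.sum_congr rfl (fun b _ => Hee_same), sum_const_real]), sum_const_real]
  have h2 : (∑ v : Vn n, Hm n (inr (inl v)) (inr (inl v))) = 2*(n:ℝ)*t0 n := by
    rw [Finset.sum_congr rfl (fun v _ => Hoo_eq), Finset.sum_const, Finset.card_univ,
      Fintype.card_sum, Fintype.card_fin, nsmul_eq_mul]
    push_cast
    ring
  have h3 : (∑ p : Vn n × Fin 2, Hm n (inr (inr p)) (inr (inr p))) = 4*(n:ℝ)*z0 n := by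
    rw [Fintype.sum_prod_type,
      Finset.sum_congr rfl (fun w _ =>
        show (∑ j : Fin 2, Hm n (inr (inr (w, j))) (inr (inr (w, j)))) = 2 * z0 n from by
          rw [Fin.sum_univ_two, Hpp_eq, Hpp_eq]; ring),
      Finset.sum_const, Finset.card_univ, Fintype.card_sum, Fintype.card_fin, nsmul_eq_mul]
    push_cast
    ring
  rw [h1, h2, h3]
  ring

lemma H_mul_lap (hn : 1 ≤ n) [DecidableEq (Xn n)] [DecidableRel (RTn n).Adj] :
    Hm n * (RTn n).lapMatrix ℝ
      = 1 - ((Fintype.card (Xn n) : ℝ))⁻¹ • Matrix.of (fun _ _ => (1:ℝ)) := by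
  have hcard : ((Fintype.card (Xn n) : ℝ)) = (n:ℝ)^2 + 6*(n:ℝ) := by
    rw [card_Xn]; push_cast; ring
  ext u v
  rw [Matrix.mul_apply]
  have hexp : ∀ w : Xn n, Hm n u w * (RTn n).lapMatrix ℝ w v
      = (if w = v then Hm n u v * ((RTn n).degree v : ℝ) else 0)
        - (if (RTn n).Adj w v then Hm n u w else 0) := by
    intro w
    rw [SimpleGraph.lapMatrix, Matrix.sub_apply, mul_sub]
    congr 1
    · rw [SimpleGraph.degMatrix, Matrix.diagonal_apply]
      by_cases hw : w = v
      · subst hw; simp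
      · simp [hw]
    · rw [SimpleGraph.adjMatrix_apply]
      by_cases ha : (RTn n).Adj w v
      · simp [ha]
      · simp [ha]
  rw [Finset.sum_congr rfl fun w _ => hexp w, Finset.sum_sub_distrib,
    sum_collapse v (fun _ => Hm n u v * ((RTn n).degree v : ℝ))]
  rw [Matrix.sub_apply, Matrix.one_apply, Matrix.smul_apply, Matrix.of_apply,
    smul_eq_mul, mul_one, hcard]
  rcases v with f | vv | ⟨w0, j0⟩
  · obtain ⟨c, d, rfl⟩ := ed_surj f
    rw [deg_edge, sum_adj_edge (Hm n u)]
    exact entry_vedge hn u c d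
  · rcases vv with c | d
    · rw [deg_origL, sum_adj_origL (Hm n u)]
      exact entry_vorigL hn u c
    · rw [deg_origR, sum_adj_origR (Hm n u)]
      exact entry_vorigR hn u d
  · rw [deg_pend, sum_adj_pend (Hm n u)]
    exact entry_vpend hn u w0 j0

end RTP

theorem kirchhoff_index_RT_completeBipartite {n : ℕ} (hn : 1 ≤ n) (r : ℝ) (hr : r = (n : ℝ)) :
    kirchhoffIndex (RTGraph (completeBipartiteGraph (Fin n) (Fin n)))
      = (r + 6) ^ 2 * (4 * (n : ℝ) - 3) / 6
        + (r + 5) * (n : ℝ)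
        + (r + 6) * (10 * (n : ℝ) - 4) * (n : ℝ) / 3
        + (r - 2) * (r + 6) * (n : ℝ) ^ 2 / 2 := by
  subst hr
  classical
  rw [kirchhoffIndex]
  rw [@key_trace (RTP.Xn n) _ (Classical.decEq _)
    (RTGraph (completeBipartiteGraph (Fin n) (Fin n))) (Classical.decRel _)
    (RTP.Hm n) (RTP.Hrow hn)
    (@RTP.H_mul_lap n hn (Classical.decEq _) (Classical.decRel _))]
  rw [RTP.Htrace, RTP.card_Xn]
  push_cast
  linear_combination RTP.eT hn
end

section
/- Let G be a connected r-regular simple graph with r ≥ 2, n vertices and m = nr/2 edges, with Laplacian characteristic polynomial φ(G; μ) = μⁿ + a₁μ^{n−1} + … + a_{n−2}μ² + a_{n−1}μ, and let L_RT be the Laplacian matrix of RT(G). Then the coefficient of μ (the linear coefficient) in det(μ·I_{m+3n} − L_RT) equals (−2)^(m−n) · (−3)^n · a_{n−1} · (r+6) · (−1)^(n−1) · (−3)^(n−1). -/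
set_option synthInstance.maxHeartbeats 400000
set_option maxHeartbeats 1600000
set_option linter.all false


open Matrix SimpleGraph Polynomial

noncomputable section
abbrev KK := RatFunc ℝ
def ι : Polynomial ℝ →+* KK := algebraMap _ _
def ρ : ℝ →+* KK := ι.comp Polynomial.C
def xx : KK := ι Polynomial.X

lemma xx_sub_ne (a : ℝ) : xx - ρ a ≠ 0 := by
  intro h
  have h2 : ι (Polynomial.X - Polynomial.C a) = 0 := by rw [map_sub]; exact h
  have := IsFractionRing.injective (Polynomial ℝ) KK (h2.trans (map_zero ι).symm)
  exact Polynomial.X_sub_C_ne_zero a this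

lemma two_eq : (2 : KK) = ρ 2 := by simp [ρ, map_ofNat]
lemma one_eq : (1 : KK) = ρ 1 := by simp [ρ]
lemma three_eq : (3 : KK) = ρ 3 := by simp [ρ, map_ofNat]

lemma h2ne : xx - 2 ≠ 0 := by rw [two_eq]; exact xx_sub_ne 2
lemma h1ne : xx - 1 ≠ 0 := by rw [one_eq]; exact xx_sub_ne 1
lemma h3ne : xx - 3 ≠ 0 := by rw [three_eq]; exact xx_sub_ne 3

variable {n m : ℕ}
def A₁ (m : ℕ) : Matrix (Fin m) (Fin m) KK := (xx - 2) • 1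
def B₁ (B : Matrix (Fin n) (Fin m) ℝ) : Matrix (Fin m) (Fin n ⊕ Fin n × Fin 2) KK :=
  Matrix.of fun a j => Sum.elim (fun v => ρ (B v a)) (fun _ => (0:KK)) j
def C₁ (B : Matrix (Fin n) (Fin m) ℝ) : Matrix (Fin n ⊕ Fin n × Fin 2) (Fin m) KK :=
  Matrix.of fun j a => Sum.elim (fun v => ρ (B v a)) (fun _ => (0:KK)) j
def A₂ (r : ℕ) (L : Matrix (Fin n) (Fin n) ℝ) : Matrix (Fin n) (Fin n) KK :=
  (xx - ((r:KK)+2)) • 1 - L.map ρ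
def B₂ (n : ℕ) : Matrix (Fin n) (Fin n × Fin 2) KK :=
  Matrix.of fun v p => if v = p.1 then (1:KK) else 0
def C₂ (n : ℕ) : Matrix (Fin n × Fin 2) (Fin n) KK :=
  Matrix.of fun p v => if p.1 = v then (1:KK) else 0
def EE : Matrix (Fin 2) (Fin 2) KK := !![xx-2, 1; 1, xx-2]
def D₂ (n : ℕ) : Matrix (Fin n × Fin 2) (Fin n × Fin 2) KK :=
  kroneckerMap (· * ·) (1 : Matrix (Fin n) (Fin n) KK) EE
def WW : Matrix (Fin 2) (Fin 2) KK := (((xx-1)*(xx-3))⁻¹) • !![xx-2, -1; -1, xx-2]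
def Dinv (n : ℕ) : Matrix (Fin n × Fin 2) (Fin n × Fin 2) KK :=
  kroneckerMap (· * ·) (1 : Matrix (Fin n) (Fin n) KK) WW

lemma hq' : (3 - xx*4 + xx^2 : KK) ≠ 0 := by
  have h : (3 - xx*4 + xx^2 : KK) = (xx-1)*(xx-3) := by ring
  rw [h]; exact mul_ne_zero h1ne h3ne
lemma h1ne' : (-1 + xx : KK) ≠ 0 := by
  have h : (-1 + xx : KK) = xx - 1 := by ring
  rw [h]; exact h1ne
lemma EE_mul_WW : EE * WW = 1 := by
  ext i j
  fin_cases i <;> fin_cases j <;>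
    simp [EE, WW, Matrix.mul_apply, Fin.sum_univ_two, Matrix.one_apply]
  all_goals
    first
      | ring1
      | (have h1 := h1ne; have h3 := h3ne; field_simp; ring1)
      | (have h1 := h1ne; have h3 := h3ne; field_simp)
lemma WW_mul_EE : WW * EE = 1 := by
  ext i j
  fin_cases i <;> fin_cases j <;>
    simp [WW, EE, Matrix.mul_apply, Fin.sum_univ_two, Matrix.one_apply]
  all_goals
    first
      | ring1
      | (have h1 := h1ne; have h3 := h3ne; field_simp; ring1)
      | (have h1 := h1ne; have h3 := h3ne; field_simp)

def D₂invertible (n : ℕ) : Invertible (D₂ n) :=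
  ⟨Dinv n, by rw [D₂, Dinv, ← Matrix.mul_kronecker_mul, one_mul, WW_mul_EE,
      Matrix.one_kronecker_one],
    by rw [D₂, Dinv, ← Matrix.mul_kronecker_mul, one_mul, EE_mul_WW,
      Matrix.one_kronecker_one]⟩

lemma det_D₂ : (D₂ n).det = ((xx-1)*(xx-3))^n := by
  rw [D₂, Matrix.det_kronecker]
  have : EE.det = (xx-1)*(xx-3) := by
    rw [EE, Matrix.det_fin_two_of]; ring
  simp [this, Fintype.card_fin]

lemma B₂_Dinv_C₂ : B₂ n * Dinv n * C₂ n = (2*(xx-1)⁻¹) • 1 := by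
  funext v w
  simp only [Matrix.mul_apply, B₂, C₂, Dinv, WW, kroneckerMap, Matrix.of_apply,
    Fintype.sum_prod_type, Matrix.one_apply, Matrix.smul_apply, Fin.sum_univ_two,
    Matrix.cons_val', Matrix.cons_val_zero, Matrix.cons_val_one, Matrix.head_cons,
    Matrix.head_fin_const, smul_eq_mul, ite_mul, one_mul, zero_mul, mul_ite, mul_one,
    mul_zero]
  by_cases h : v = w
  all_goals
    simp [h, Finset.sum_add_distrib, Finset.sum_ite_eq, Finset.sum_ite_eq']
  all_goals
    first
      | ring1
      | (have hh := hq'; have h1 := h1ne'; have h2 := h1ne; have h3 := h3ne; field_simp; ring1)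
      | (have hh := hq'; have h1 := h1ne'; have h2 := h1ne; have h3 := h3ne; field_simp)

-- block identification (proven in t4, reproven here)
lemma block_id (r : ℕ) (B : Matrix (Fin n) (Fin m) ℝ) (L : Matrix (Fin n) (Fin n) ℝ) :
    (charmatrix (LRTMatrix r B L)).map ι
      = fromBlocks (A₁ m) (B₁ B) (C₁ B) (fromBlocks (A₂ r L) (B₂ n) (C₂ n) (D₂ n)) := by
  funext i j
  rcases i with a | v | ⟨w, k⟩ <;> rcases j with b | v' | ⟨w', k'⟩ <;>
    [skip; skip; skip; skip; skip; skip; skip; skip;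
     (fin_cases k <;> fin_cases k' <;>
       simp [charmatrix_apply, LRTMatrix, D₂, EE, xx, ι, ρ, map_ofNat,
         Matrix.diagonal_apply, Matrix.one_apply, fromBlocks, Prod.ext_iff, kroneckerMap] <;>
       (try split_ifs) <;> (try simp_all) <;> (try ring))] <;>
    simp [charmatrix_apply, LRTMatrix, A₁, B₁, C₁, A₂, B₂, C₂, D₂, EE, xx, ι, ρ, map_ofNat,
      Matrix.diagonal_apply, Matrix.one_apply, Matrix.smul_apply, fromBlocks,
      Prod.ext_iff, kroneckerMap] <;>
    (try split_ifs) <;> (try simp_all [map_ofNat]) <;> (try ring)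

lemma C₁B₁ (r : ℕ) (B : Matrix (Fin n) (Fin m) ℝ) (L : Matrix (Fin n) (Fin n) ℝ)
    (hBBt : ∀ v w, (∑ a : Fin m, B v a * B w a)
      = 2*(r:ℝ)*(if v = w then 1 else 0) - L v w) :
    C₁ B * B₁ B = fromBlocks ((2*(r:KK)) • (1 : Matrix (Fin n) (Fin n) KK) - L.map ρ) 0 0 0 := by
  funext i j
  rcases i with v | p <;> rcases j with w | q <;>
    simp [C₁, B₁, Matrix.mul_apply, fromBlocks, Matrix.one_apply, Matrix.map_apply]
  have : ∑ a : Fin m, ρ (B v a) * ρ (B w a) = ρ (∑ a : Fin m, B v a * B w a) := by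
    rw [map_sum]; simp [_root_.map_mul]
  have h2' : ρ (2:ℝ) = 2 := map_ofNat ρ 2
  have hr' : ρ ((r:ℝ)) = (r:KK) := map_natCast ρ r
  rw [this, hBBt v w, map_sub, _root_.map_mul, _root_.map_mul, h2', hr', apply_ite ρ,
    _root_.map_one, _root_.map_zero]
  split_ifs <;> simp

def A₃ (r : ℕ) (L : Matrix (Fin n) (Fin n) ℝ) : Matrix (Fin n) (Fin n) KK :=
  A₂ r L - (xx-2)⁻¹ • ((2*(r:KK)) • (1 : Matrix (Fin n) (Fin n) KK) - L.map ρ)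

lemma step1 (r : ℕ) (B : Matrix (Fin n) (Fin m) ℝ) (L : Matrix (Fin n) (Fin n) ℝ)
    (hBBt : ∀ v w, (∑ a : Fin m, B v a * B w a)
      = 2*(r:ℝ)*(if v = w then 1 else 0) - L v w) :
    ((charmatrix (LRTMatrix r B L)).map ι).det
      = (xx-2)^m * (fromBlocks (A₃ r L) (B₂ n) (C₂ n) (D₂ n)).det := by
  rw [block_id]
  haveI : Invertible (A₁ m) := ⟨(xx-2)⁻¹ • 1, by
      rw [A₁, smul_mul_smul_comm, one_mul, inv_mul_cancel₀ h2ne, one_smul], by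
      rw [A₁, smul_mul_smul_comm, one_mul, mul_inv_cancel₀ h2ne, one_smul]⟩
  rw [Matrix.det_fromBlocks₁₁]
  congr 1
  · rw [A₁, Matrix.det_smul, Matrix.det_one, Fintype.card_fin, mul_one]
  · congr 1
    have hinv : ⅟(A₁ m) = (xx-2)⁻¹ • (1 : Matrix (Fin m) (Fin m) KK) :=
      invOf_eq_right_inv (by
        rw [A₁, smul_mul_smul_comm, one_mul, mul_inv_cancel₀ h2ne, one_smul])
    rw [hinv, Matrix.mul_smul, Matrix.mul_one, Matrix.smul_mul, C₁B₁ r B L hBBt]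
    funext i j
    rcases i with v | p <;> rcases j with w | q <;>
      simp [fromBlocks, A₃]

def cval (r : ℕ) : KK := xx^3 - ((r:KK)+5)*xx^2 + ((r:KK)+6)*xx
def qval : KK := (xx-1)*(xx-3)
def γv (r : ℕ) : KK := cval r / qval
def βv : KK := (xx-3) * (xx-2)⁻¹

lemma qval_ne : qval ≠ 0 := mul_ne_zero h1ne h3ne
lemma βv_ne : βv ≠ 0 := mul_ne_zero h3ne (inv_ne_zero h2ne)

lemma step2 (r : ℕ) (L : Matrix (Fin n) (Fin n) ℝ) :
    (fromBlocks (A₃ r L) (B₂ n) (C₂ n) (D₂ n)).det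
      = ((xx-1)*(xx-3))^n * (A₃ r L - (2*(xx-1)⁻¹) • 1).det := by
  haveI := D₂invertible n
  rw [Matrix.det_fromBlocks₂₂, det_D₂]
  congr 2
  have hinv : ⅟(D₂ n) = Dinv n :=
    invOf_eq_right_inv (by
      rw [D₂, Dinv, ← Matrix.mul_kronecker_mul, one_mul, EE_mul_WW, Matrix.one_kronecker_one])
  rw [hinv, B₂_Dinv_C₂]

lemma S_eq (r : ℕ) (L : Matrix (Fin n) (Fin n) ℝ) :
    A₃ r L - (2*(xx-1)⁻¹) • (1 : Matrix (Fin n) (Fin n) KK)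
      = βv • ((γv r) • 1 - L.map ρ) := by
  funext v w
  have h1 := h1ne; have h2 := h2ne; have h3 := h3ne
  simp only [A₃, A₂, βv, γv, cval, qval, Matrix.sub_apply, Matrix.smul_apply,
    Matrix.one_apply, Matrix.map_apply, smul_eq_mul]
  by_cases h : v = w <;> simp only [h, if_true, if_false] <;> field_simp <;> ring

lemma detS (r : ℕ) (L : Matrix (Fin n) (Fin n) ℝ) :
    (A₃ r L - (2*(xx-1)⁻¹) • (1 : Matrix (Fin n) (Fin n) KK)).det
      = βv^n * Polynomial.eval (γv r) (L.charpoly.map ρ) := by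
  rw [S_eq, Matrix.det_smul, Fintype.card_fin]
  congr 1
  rw [← Matrix.charpoly_map]
  -- eval of charpoly
  rw [Matrix.charpoly, ← Polynomial.coe_evalRingHom, RingHom.map_det]
  congr 1
  ext i j
  by_cases h : i = j <;>
    simp [h, Matrix.charmatrix_apply, Matrix.one_apply, Matrix.diagonal_apply]

def dpoly (r : ℕ) : Polynomial ℝ := X^2 - C ((r:ℝ)+5) * X + C ((r:ℝ)+6)
def qpoly : Polynomial ℝ := (X - C 1) * (X - C 3)
def Npoly (r n : ℕ) (χ : Polynomial ℝ) : Polynomial ℝ :=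
  ∑ k ∈ Finset.range (n+1), C (χ.coeff k) * (X * dpoly r)^k * qpoly^(n-k)

lemma ι_C (a : ℝ) : ι (C a) = ρ a := rfl
lemma ι_cpoly (r : ℕ) : ι (X * dpoly r) = cval r := by
  have h5 : ρ ((r:ℝ)+5) = (r:KK)+5 := by
    rw [map_add, map_natCast, map_ofNat]
  have h6 : ρ ((r:ℝ)+6) = (r:KK)+6 := by
    rw [map_add, map_natCast, map_ofNat]
  rw [_root_.map_mul, dpoly, map_add, map_sub, map_pow, _root_.map_mul]
  rw [ι_C, ι_C, h5, h6]
  show xx * (xx^2 - ((r:KK)+5) * xx + ((r:KK)+6)) = cval r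
  rw [cval]; ring
lemma ι_qpoly : ι qpoly = qval := by
  rw [qpoly, _root_.map_mul, map_sub, map_sub, ι_C, ι_C]
  show (xx - ρ 1) * (xx - ρ 3) = qval
  rw [qval, _root_.map_one, map_ofNat]
lemma ι_X2 : ι (X - C 2) = xx - 2 := by
  rw [map_sub, ι_C]
  show xx - ρ 2 = xx - 2
  rw [map_ofNat]
lemma ι_X3 : ι (X - C 3) = xx - 3 := by
  rw [map_sub, ι_C]
  show xx - ρ 3 = xx - 3
  rw [map_ofNat]

lemma main_id (r : ℕ) (B : Matrix (Fin n) (Fin m) ℝ) (L : Matrix (Fin n) (Fin n) ℝ)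
    (hBBt : ∀ v w, (∑ a : Fin m, B v a * B w a)
      = 2*(r:ℝ)*(if v = w then 1 else 0) - L v w)
    (hmn : n ≤ m) :
    (LRTMatrix r B L).charpoly
      = (X - C 2)^(m-n) * (X - C 3)^n * Npoly r n L.charpoly := by
  apply IsFractionRing.injective (Polynomial ℝ) KK
  show ι _ = ι _
  rw [Matrix.charpoly, RingHom.map_det, RingHom.mapMatrix_apply, step1 r B L hBBt, step2, detS]
  rw [_root_.map_mul, _root_.map_mul, map_pow, map_pow, ι_X2, ι_X3]
  -- expand eval
  have hdeg : (L.charpoly.map ρ).natDegree < n + 1 := by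
    apply lt_of_le_of_lt (Polynomial.natDegree_map_le)
    rw [Matrix.charpoly_natDegree_eq_dim, Fintype.card_fin]
    omega
  rw [Polynomial.eval_eq_sum_range' hdeg]
  -- expand ι Npoly
  have hN : ι (Npoly r n L.charpoly)
      = ∑ k ∈ Finset.range (n+1),
          ρ (L.charpoly.coeff k) * (cval r)^k * qval^(n-k) := by
    rw [Npoly, map_sum ι (fun k => C (L.charpoly.coeff k) * (X * dpoly r)^k * qpoly^(n-k))
      (Finset.range (n+1))]
    refine Finset.sum_congr rfl fun k _ => ?_
    rw [_root_.map_mul, _root_.map_mul, map_pow, map_pow, ι_C, ι_cpoly, ι_qpoly]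
  rw [hN]
  simp only [Finset.mul_sum]
  refine Finset.sum_congr rfl fun k hk => ?_
  have hkn : k ≤ n := by simpa [Nat.lt_succ_iff] using hk
  have e1 : (xx-2)^m = (xx-2)^(m-n) * (xx-2)^n := by
    rw [← pow_add, Nat.sub_add_cancel hmn]
  have e2 : qval^n = qval^(n-k) * qval^k := by
    rw [← pow_add, Nat.sub_add_cancel hkn]
  have hcoeff : Polynomial.coeff (Polynomial.map ρ L.charpoly) k = ρ (L.charpoly.coeff k) :=
    Polynomial.coeff_map ρ k
  rw [hcoeff]
  have hq : qval ≠ 0 := qval_ne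
  have h2 := h2ne
  have hγ : (γv r)^k = (cval r)^k * (qval^k)⁻¹ := by
    rw [γv, div_pow, div_eq_mul_inv]
  have hβ : βv^n = (xx-3)^n * ((xx-2)^n)⁻¹ := by
    rw [βv, mul_pow, inv_pow]
  have hqval : ((xx-1)*(xx-3))^n = qval^n := rfl
  rw [hqval, hγ, hβ, e1, e2]
  field_simp

lemma coeff_one_mul' (p q : Polynomial ℝ) :
    (p * q).coeff 1 = p.coeff 0 * q.coeff 1 + p.coeff 1 * q.coeff 0 := by
  rw [Polynomial.coeff_mul]
  rw [show (1:ℕ) = 0 + 1 from rfl, Finset.Nat.sum_antidiagonal_eq_sum_range_succ_mk]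
  simp [Finset.sum_range_succ, add_comm]

lemma Npoly_coeff0 (r nn : ℕ) (χ : Polynomial ℝ) (hχ0 : χ.coeff 0 = 0) :
    (Npoly r nn χ).coeff 0 = 0 := by
  rw [Npoly, Polynomial.finset_sum_coeff]
  apply Finset.sum_eq_zero
  intro k hk
  rcases Nat.eq_zero_or_pos k with rfl | hkpos
  · simp [hχ0]
  · rw [show C (χ.coeff k) * (X * dpoly r)^k * qpoly^(nn-k)
        = (C (χ.coeff k) * dpoly r^k * qpoly^(nn-k)) * X^k from by ring,
      Polynomial.coeff_mul_X_pow', if_neg (by omega)]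

lemma Npoly_coeff1 (r nn : ℕ) (hn : 1 ≤ nn) (χ : Polynomial ℝ) (hχ0 : χ.coeff 0 = 0) :
    (Npoly r nn χ).coeff 1 = χ.coeff 1 * ((r:ℝ)+6) * 3^(nn-1) := by
  rw [Npoly, Polynomial.finset_sum_coeff]
  rw [Finset.sum_eq_single 1]
  · rw [show C (χ.coeff 1) * (X * dpoly r)^1 * qpoly^(nn-1)
        = (C (χ.coeff 1) * dpoly r^1 * qpoly^(nn-1)) * X^1 from by ring,
      Polynomial.coeff_mul_X_pow', if_pos le_rfl]
    rw [Polynomial.coeff_zero_eq_eval_zero]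
    simp [dpoly, qpoly]
    try ring
  · intro k hk hk1
    rcases Nat.eq_zero_or_pos k with rfl | hkpos
    · simp [hχ0]
    · rw [show C (χ.coeff k) * (X * dpoly r)^k * qpoly^(nn-k)
          = (C (χ.coeff k) * dpoly r^k * qpoly^(nn-k)) * X^k from by ring,
        Polynomial.coeff_mul_X_pow', if_neg (by omega)]
  · intro h
    exact absurd (Finset.mem_range.mpr (by omega)) h

-- combinatorial lemma
open SimpleGraph in
lemma BBt_lemma {n m : ℕ} (r : ℕ) (G : SimpleGraph (Fin n)) [DecidableRel G.Adj]
    (hreg : G.IsRegularOfDegree r)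
    (φ : Fin m ≃ G.edgeSet) (B : Matrix (Fin n) (Fin m) ℝ)
    (hB : ∀ (v : Fin n) (j : Fin m), B v j = if v ∈ (φ j : Sym2 (Fin n)) then 1 else 0)
    (v w : Fin n) :
    (∑ a : Fin m, B v a * B w a)
      = 2 * r * (if v = w then 1 else 0) - G.lapMatrix ℝ v w := by
  have key : (∑ a : Fin m, B v a * B w a)
      = ∑ e ∈ G.edgeFinset, (if v ∈ e ∧ w ∈ e then (1:ℝ) else 0) := by
    rw [SimpleGraph.edgeFinset, ← Finset.sum_set_coe]
    rw [← Equiv.sum_comp φ (fun e => if v ∈ (e : Sym2 (Fin n)) ∧ w ∈ (e : Sym2 (Fin n)) then (1:ℝ) else 0)]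
    refine Finset.sum_congr rfl fun a _ => ?_
    simp only [hB, ite_and]
    split_ifs <;> ring
  rw [key]
  rcases eq_or_ne v w with rfl | hvw
  · simp only [and_self, Finset.sum_boole]
    rw [← SimpleGraph.incidenceFinset_eq_filter, SimpleGraph.card_incidenceFinset_eq_degree,
      hreg v]
    simp [lapMatrix, degMatrix, adjMatrix, hreg v, G.irrefl]
    try ring
  · rw [Finset.sum_boole]
    have hlap : G.lapMatrix ℝ v w = if G.Adj v w then -1 else 0 := by
      simp [lapMatrix, degMatrix, adjMatrix, Matrix.diagonal_apply_ne _ hvw]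
      try (split_ifs <;> ring)
    by_cases hadj : G.Adj v w
    · have : Finset.filter (fun e => v ∈ e ∧ w ∈ e) G.edgeFinset = {s(v,w)} := by
        ext e
        simp only [Finset.mem_filter, Finset.mem_singleton, mem_edgeFinset]
        constructor
        · rintro ⟨he, hv, hw⟩
          exact (Sym2.mem_and_mem_iff hvw).mp ⟨hv, hw⟩
        · rintro rfl
          refine ⟨(mem_edgeSet G).mpr hadj, by simp⟩
      rw [this]
      simp [hlap, hadj, hvw]
    · have : Finset.filter (fun e => v ∈ e ∧ w ∈ e) G.edgeFinset = ∅ := by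
        ext e
        simp only [Finset.mem_filter, Finset.notMem_empty, iff_false, not_and, mem_edgeFinset]
        intro he hv hw
        exact hadj ((mem_edgeSet G).mp (((Sym2.mem_and_mem_iff hvw).mp ⟨hv, hw⟩) ▸ he))
      rw [this]
      simp [hlap, hadj, hvw]


theorem linear_coeff_charpoly_LRT {n m : ℕ} (r : ℕ) (hr : 2 ≤ r)
    (G : SimpleGraph (Fin n)) [DecidableRel G.Adj]
    (hconn : G.Connected) (hreg : G.IsRegularOfDegree r) (hm : 2 * m = n * r)
    (φ : Fin m ≃ G.edgeSet) (B : Matrix (Fin n) (Fin m) ℝ)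
    (hB : ∀ (v : Fin n) (j : Fin m), B v j = if v ∈ (φ j : Sym2 (Fin n)) then 1 else 0) :
    (LRTMatrix r B (G.lapMatrix ℝ)).charpoly.coeff 1
      = (-2 : ℝ) ^ ((m : ℤ) - (n : ℤ)) * (-3 : ℝ) ^ n *
          ((G.lapMatrix ℝ).charpoly.coeff 1) * ((r : ℝ) + 6) *
          (-1 : ℝ) ^ (n - 1) * (-3 : ℝ) ^ (n - 1) := by
  have hne : Nonempty (Fin n) := hconn.nonempty
  have hn1 : 1 ≤ n := Fin.pos_iff_nonempty.mpr hne
  have hmn : n ≤ m := by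
    have h1 : n * 2 ≤ n * r := Nat.mul_le_mul_left n hr
    omega
  have hdet : (G.lapMatrix ℝ).det = 0 := by
    apply Matrix.exists_mulVec_eq_zero_iff.mp
    refine ⟨fun _ => 1, ?_, G.lapMatrix_mulVec_const_eq_zero⟩
    intro h
    have := congrFun h (Classical.arbitrary (Fin n))
    simp at this
  have hχ0 : (G.lapMatrix ℝ).charpoly.coeff 0 = 0 := by
    rw [Polynomial.coeff_zero_eq_eval_zero]
    have : (G.lapMatrix ℝ).charpoly.eval 0
        = ((0:ℝ) • (1 : Matrix (Fin n) (Fin n) ℝ) - G.lapMatrix ℝ).det := by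
      rw [Matrix.charpoly, ← Polynomial.coe_evalRingHom, RingHom.map_det]
      congr 1
      ext i j
      by_cases h : i = j <;>
        simp [h, Matrix.charmatrix_apply, Matrix.one_apply, Matrix.diagonal_apply]
    rw [this, zero_smul, zero_sub, Matrix.det_neg, hdet, mul_zero]
  have hBBt : ∀ v w, (∑ a : Fin m, B v a * B w a)
      = 2*(r:ℝ)*(if v = w then 1 else 0) - (G.lapMatrix ℝ) v w :=
    fun v w => BBt_lemma r G hreg φ B hB v w
  rw [main_id r B (G.lapMatrix ℝ) hBBt hmn]
  rw [coeff_one_mul', Npoly_coeff0 r n _ hχ0, Npoly_coeff1 r n hn1 _ hχ0, mul_zero, add_zero]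
  have hc0 : ((X - C 2)^(m-n) * (X - C 3)^n : Polynomial ℝ).coeff 0
      = (-2)^(m-n) * (-3)^n := by
    rw [Polynomial.coeff_zero_eq_eval_zero]
    simp
  rw [hc0]
  have hz : ((-2 : ℝ)) ^ ((m : ℤ) - (n : ℤ)) = (-2 : ℝ)^(m-n) := by
    rw [show (m:ℤ) - (n:ℤ) = ((m-n : ℕ) : ℤ) by omega, zpow_natCast]
  rw [hz]
  have h31 : ((-1 : ℝ))^(n-1) * (-3 : ℝ)^(n-1) = 3^(n-1) := by
    rw [← mul_pow]; norm_num
  rw [show ((-2:ℝ))^(m-n) * (-3:ℝ)^n * ((G.lapMatrix ℝ).charpoly.coeff 1) * ((r:ℝ)+6)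
      * (-1:ℝ)^(n-1) * (-3:ℝ)^(n-1)
      = (-2:ℝ)^(m-n) * (-3:ℝ)^n * ((G.lapMatrix ℝ).charpoly.coeff 1) * ((r:ℝ)+6)
        * ((-1:ℝ)^(n-1) * (-3:ℝ)^(n-1)) from by ring, h31]
  ring
end
end
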